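/- arXiv:2307.09201 — 8 statements merged into one kernel-verified Lean document; each statement's English description precedes it below -/
import Mathlib

section
/- Let n ≥ 1, fix a type α = (α₁,…,αₙ) with index set I_α, exponents β_i and common value c, and let p and q be the associated functionals. Let k, C, λ > 0 be real numbers. Suppose x, x_γ : [0,∞) → ℝⁿ are continuous, p(x(τ)) < 1 and p(x_γ(τ)) = 1 for all τ ≥ 0, and ‖x(τ) − x_γ(τ)‖ ≤ C·e^{−λτ} for all τ ≥ 0. Then the improper integral ∫₀^∞ q(x(τ))·(1 − p(x(τ))^{2c})^k dτ is finite. (This integral equals the length t_max − t₀ of the maximal existence interval of the corresponding solution of the original ODE under the time-scale desingularization dt = q(x)(1 − p(x)^{2c})^k dτ, so the solution blows up in finite time.) -/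
open Real Set MeasureTheory Filter

/-- The quasi-parabolic functional `p(x) = (∑_{i ∈ Iα} x_i^{2βᵢ})^{1/(2c)}`. -/
noncomputable def pQH {n : ℕ} (Iα : Finset (Fin n)) (β : Fin n → ℕ) (c : ℕ)
    (x : Fin n → ℝ) : ℝ :=
  (∑ i ∈ Iα, x i ^ (2 * β i)) ^ ((1 : ℝ) / (2 * (c : ℝ)))

/-- The functional `q(x) = 1 - ((2c-1)/(2c)) (1 - p(x)^{2c})`. -/
noncomputable def qQH {n : ℕ} (Iα : Finset (Fin n)) (β : Fin n → ℕ) (c : ℕ)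
    (x : Fin n → ℝ) : ℝ :=
  1 - ((2 * (c : ℝ) - 1) / (2 * (c : ℝ))) * (1 - pQH Iα β c x ^ (2 * (c : ℝ)))

lemma abs_pow_sub_pow_le_of_abs_le_one {a b : ℝ} (ha : |a| ≤ 1) (hb : |b| ≤ 1)
    (m : ℕ) : |a ^ m - b ^ m| ≤ m * |a - b| := by
  induction m with
  | zero => simp
  | succ m ih =>
      have h1 : a ^ (m + 1) - b ^ (m + 1) = a ^ m * (a - b) + b * (a ^ m - b ^ m) := by
        ring
      have h2 : |a ^ m| ≤ 1 := by
        rw [abs_pow]; exact pow_le_one₀ (abs_nonneg a) ha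
      calc |a ^ (m + 1) - b ^ (m + 1)|
          ≤ |a ^ m * (a - b)| + |b * (a ^ m - b ^ m)| := by rw [h1]; exact abs_add_le _ _
        _ ≤ 1 * |a - b| + 1 * (m * |a - b|) := by
            rw [abs_mul, abs_mul]
            gcongr
        _ = (↑(m + 1)) * |a - b| := by push_cast; ring

lemma pQH_rpow_two_c {n : ℕ} (Iα : Finset (Fin n)) (β : Fin n → ℕ) (c : ℕ)
    (hc : 0 < c) (y : Fin n → ℝ) :
    pQH Iα β c y ^ (2 * (c : ℝ)) = ∑ i ∈ Iα, y i ^ (2 * β i) := by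
  have hs : (0 : ℝ) ≤ ∑ i ∈ Iα, y i ^ (2 * β i) :=
    Finset.sum_nonneg fun i _ => (even_two_mul (β i)).pow_nonneg _
  have h2c : (2 * (c : ℝ)) ≠ 0 := by positivity
  rw [pQH, ← Real.rpow_mul hs, one_div_mul_cancel h2c, Real.rpow_one]

/-- If the compactified trajectory `x` stays strictly inside the
horizon, `x_γ` is a trajectory on the horizon, and `x` shadows `x_γ` with exponential
rate `C e^{-λ τ}`, then the improper integral
`∫₀^∞ q(x(τ)) (1 - p(x(τ))^{2c})^k dτ` is finite, i.e. the original solution blows up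
in finite time. -/
theorem blowup_finite_time_of_exponential_shadowing
    {n : ℕ} (hn : 1 ≤ n)
    (α : Fin n → ℕ) (hα : ∃ i, α i ≠ 0)
    (Iα : Finset (Fin n)) (hIα : ∀ i, i ∈ Iα ↔ 0 < α i)
    (c : ℕ) (hc : 0 < c)
    (β : Fin n → ℕ) (hβpos : ∀ i ∈ Iα, 0 < β i)
    (hβ : ∀ i ∈ Iα, α i * β i = c)
    (k C lam : ℝ) (hk : 0 < k) (hC : 0 < C) (hlam : 0 < lam)
    (x xγ : ℝ → Fin n → ℝ)
    (hx : ContinuousOn x (Ici 0)) (hxγ : ContinuousOn xγ (Ici 0))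
    (hxin : ∀ τ ∈ Ici (0 : ℝ), pQH Iα β c (x τ) < 1)
    (hhor : ∀ τ ∈ Ici (0 : ℝ), pQH Iα β c (xγ τ) = 1)
    (hshadow : ∀ τ ∈ Ici (0 : ℝ), ‖x τ - xγ τ‖ ≤ C * Real.exp (-lam * τ)) :
    IntegrableOn
      (fun τ => qQH Iα β c (x τ) * (1 - pQH Iα β c (x τ) ^ (2 * (c : ℝ))) ^ k)
      (Ici 0) := by
  set s : ℝ → ℝ := fun τ => ∑ i ∈ Iα, x τ i ^ (2 * β i) with hs_def
  have hs0 : ∀ τ, 0 ≤ s τ :=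
    fun τ => Finset.sum_nonneg fun i _ => (even_two_mul (β i)).pow_nonneg _
  have hpx : ∀ τ, pQH Iα β c (x τ) ^ (2 * (c : ℝ)) = s τ :=
    fun τ => pQH_rpow_two_c Iα β c hc (x τ)
  have hs1 : ∀ τ ∈ Ici (0 : ℝ), s τ < 1 := by
    intro τ hτ
    rw [← hpx τ]
    exact Real.rpow_lt_one (Real.rpow_nonneg (hs0 τ) _) (hxin τ hτ) (by positivity)
  have hsγ : ∀ τ ∈ Ici (0 : ℝ), ∑ i ∈ Iα, xγ τ i ^ (2 * β i) = 1 := by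
    intro τ hτ
    rw [← pQH_rpow_two_c Iα β c hc (xγ τ), hhor τ hτ, Real.one_rpow]
  -- bounds on components
  have hxabs : ∀ τ ∈ Ici (0 : ℝ), ∀ i ∈ Iα, |x τ i| ≤ 1 := by
    intro τ hτ i hi
    have h1 : x τ i ^ (2 * β i) ≤ s τ :=
      Finset.single_le_sum (f := fun j => x τ j ^ (2 * β j))
        (fun j _ => (even_two_mul (β j)).pow_nonneg _) hi
    have h2 : |x τ i| ^ (2 * β i) ≤ 1 := by
      rw [← abs_pow, abs_of_nonneg ((even_two_mul (β i)).pow_nonneg _)]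
      exact h1.trans (hs1 τ hτ).le
    exact (pow_le_one_iff_of_nonneg (abs_nonneg _)
      (by have := hβpos i hi; omega)).mp h2
  have hxγabs : ∀ τ ∈ Ici (0 : ℝ), ∀ i ∈ Iα, |xγ τ i| ≤ 1 := by
    intro τ hτ i hi
    have h1 : xγ τ i ^ (2 * β i) ≤ 1 := by
      rw [← hsγ τ hτ]
      exact Finset.single_le_sum (f := fun j => xγ τ j ^ (2 * β j))
        (fun j _ => (even_two_mul (β j)).pow_nonneg _) hi
    have h2 : |xγ τ i| ^ (2 * β i) ≤ 1 := by
      rw [← abs_pow, abs_of_nonneg ((even_two_mul (β i)).pow_nonneg _)]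
      exact h1
    exact (pow_le_one_iff_of_nonneg (abs_nonneg _)
      (by have := hβpos i hi; omega)).mp h2
  set M : ℝ := ∑ i ∈ Iα, (2 * (β i : ℝ)) with hM_def
  have hM0 : 0 ≤ M := Finset.sum_nonneg fun i _ => by positivity
  -- key exponential bound
  have hkey : ∀ τ ∈ Ici (0 : ℝ), 1 - s τ ≤ M * C * Real.exp (-lam * τ) := by
    intro τ hτ
    have h1 : 1 - s τ = ∑ i ∈ Iα, (xγ τ i ^ (2 * β i) - x τ i ^ (2 * β i)) := by
      rw [Finset.sum_sub_distrib, hsγ τ hτ]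
    rw [h1]
    calc ∑ i ∈ Iα, (xγ τ i ^ (2 * β i) - x τ i ^ (2 * β i))
        ≤ ∑ i ∈ Iα, |xγ τ i ^ (2 * β i) - x τ i ^ (2 * β i)| :=
          Finset.sum_le_sum fun i _ => le_abs_self _
      _ ≤ ∑ i ∈ Iα, (2 * (β i : ℝ)) * (C * Real.exp (-lam * τ)) := by
          refine Finset.sum_le_sum fun i hi => ?_
          have hb := abs_pow_sub_pow_le_of_abs_le_one (hxγabs τ hτ i hi)
            (hxabs τ hτ i hi) (2 * β i)
          have hcomp : |xγ τ i - x τ i| ≤ C * Real.exp (-lam * τ) := by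
            have h3 : |xγ τ i - x τ i| ≤ ‖x τ - xγ τ‖ := by
              rw [abs_sub_comm]
              have := norm_le_pi_norm (x τ - xγ τ) i
              simpa using this
            exact h3.trans (hshadow τ hτ)
          calc |xγ τ i ^ (2 * β i) - x τ i ^ (2 * β i)|
              ≤ (2 * β i : ℕ) * |xγ τ i - x τ i| := hb
            _ ≤ (2 * (β i : ℝ)) * (C * Real.exp (-lam * τ)) := by
                push_cast
                gcongr
      _ = M * C * Real.exp (-lam * τ) := by rw [← Finset.sum_mul]; ring
  -- q bound
  have hqbound : ∀ τ ∈ Ici (0 : ℝ), |qQH Iα β c (x τ)| ≤ 1 := by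
    intro τ hτ
    have hr0 : (0 : ℝ) ≤ (2 * (c : ℝ) - 1) / (2 * (c : ℝ)) := by
      apply div_nonneg _ (by positivity)
      have : (1 : ℝ) ≤ (c : ℝ) := by exact_mod_cast hc
      linarith
    have hr1 : (2 * (c : ℝ) - 1) / (2 * (c : ℝ)) ≤ 1 := by
      rw [div_le_one (by positivity)]
      linarith
    have h1s0 : 0 ≤ 1 - s τ := by linarith [hs1 τ hτ]
    have h1s1 : 1 - s τ ≤ 1 := by linarith [hs0 τ]
    rw [qQH, hpx τ, abs_le]
    constructor
    · nlinarith
    · nlinarith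
  -- dominating integrable function
  have hMC : 0 ≤ M * C := by positivity
  have hgint : IntegrableOn
      (fun τ => (M * C) ^ k * Real.exp (-(lam * k) * τ)) (Ici 0) := by
    rw [integrableOn_Ici_iff_integrableOn_Ioi]
    exact (exp_neg_integrableOn_Ioi 0 (by positivity)).const_mul _
  -- continuity / measurability
  have hscont : ContinuousOn s (Ici 0) := by
    apply continuousOn_finset_sum
    intro i _
    exact ((continuous_apply i).comp_continuousOn hx).pow _
  have hfcont : ContinuousOn
      (fun τ => qQH Iα β c (x τ) * (1 - pQH Iα β c (x τ) ^ (2 * (c : ℝ))) ^ k)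
      (Ici 0) := by
    have hg : ContinuousOn
        (fun τ => (1 - ((2 * (c : ℝ) - 1) / (2 * (c : ℝ))) * (1 - s τ)) *
          (1 - s τ) ^ k) (Ici 0) := by
      apply ContinuousOn.mul
      · exact continuousOn_const.sub
          (continuousOn_const.mul (continuousOn_const.sub hscont))
      · exact (continuousOn_const.sub hscont).rpow_const
          fun τ hτ => Or.inr hk.le
    refine hg.congr fun τ hτ => ?_
    rw [qQH, hpx τ]
  apply Integrable.mono' hgint (hfcont.aestronglyMeasurable measurableSet_Ici)
  filter_upwards [ae_restrict_mem measurableSet_Ici] with τ hτ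
  have h1s0 : 0 ≤ 1 - s τ := by linarith [hs1 τ hτ]
  have hrp : (1 - s τ) ^ k ≤ (M * C * Real.exp (-lam * τ)) ^ k :=
    Real.rpow_le_rpow h1s0 (hkey τ hτ) hk.le
  have heq : (M * C * Real.exp (-lam * τ)) ^ k =
      (M * C) ^ k * Real.exp (-(lam * k) * τ) := by
    rw [Real.mul_rpow hMC (Real.exp_nonneg _), ← Real.exp_mul]
    ring_nf
  calc ‖qQH Iα β c (x τ) * (1 - pQH Iα β c (x τ) ^ (2 * (c : ℝ))) ^ k‖
      = |qQH Iα β c (x τ)| * |(1 - s τ) ^ k| := by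
        rw [norm_mul, hpx τ]; rfl
    _ ≤ 1 * (1 - s τ) ^ k := by
        rw [abs_of_nonneg (Real.rpow_nonneg h1s0 _)]
        exact mul_le_mul_of_nonneg_right (hqbound τ hτ) (Real.rpow_nonneg h1s0 _)
    _ = (1 - s τ) ^ k := one_mul _
    _ ≤ (M * C) ^ k * Real.exp (-(lam * k) * τ) := heq ▸ hrp
end

section
/- Let k, λ > 0 and 0 < δ ≤ 1. Suppose h : [0,∞) → (0,1] and q̃ : [0,∞) → [δ,1] are continuous, and for every ε > 0 one has e^{(λ+ε)τ}·h(τ) → +∞ and e^{(λ−ε)τ}·h(τ) → 0 as τ → ∞. Then for every τ ≥ 0 the tail integral T(τ) := ∫_τ^∞ q̃(σ)·h(σ)^k dσ is finite, and for every ε > 0 one has e^{(kλ+ε)τ}·T(τ) → +∞ and e^{(kλ−ε)τ}·T(τ) → 0 as τ → ∞; equivalently, (ln T(τ))/τ → −kλ as τ → ∞. -/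
/-!
Write `g ≍ e^{-rτ}` when `e^{-(r+ε)τ} ≤ g(τ) ≤ e^{-(r-ε)τ}` eventually, for every `ε > 0`.
This relation absorbs positive multiplicative constants (they cost an arbitrarily small change
of `ε`), so `h ≍ e^{-λτ}` gives `q̃ h^k ≍ e^{-kλτ}`, and integrating the two exponential bounds
over `[τ, ∞)` gives `T ≍ e^{-kλτ}`. The hypotheses on `h` and the three limits in the
conclusion are other ways of expressing such a relation.
-/

open Real Set MeasureTheory Filter Topology

def HasExpDecayRate (g : ℝ → ℝ) (r : ℝ) : Prop :=
  ∀ ε > 0, ∀ᶠ τ in atTop, exp (-(r + ε) * τ) ≤ g τ ∧ g τ ≤ exp (-(r - ε) * τ)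

theorem eventually_mul_exp_le_exp (c : ℝ) {a b : ℝ} (hab : a < b) :
    ∀ᶠ τ in atTop, c * exp (a * τ) ≤ exp (b * τ) := by
  have hgrow : Tendsto (fun τ => exp ((b - a) * τ)) atTop atTop :=
    tendsto_exp_atTop.comp (tendsto_id.const_mul_atTop (sub_pos.2 hab))
  filter_upwards [hgrow.eventually_ge_atTop c] with τ hτ
  calc c * exp (a * τ) ≤ exp ((b - a) * τ) * exp (a * τ) := by gcongr
    _ = exp (b * τ) := by rw [← exp_add]; ring_nf

theorem integrableOn_Ici_exp_neg_mul {c : ℝ} (hc : 0 < c) (τ : ℝ) :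
    IntegrableOn (fun σ => exp (-c * σ)) (Ici τ) :=
  (integrableOn_Ici_iff_integrableOn_Ioi).2 (integrableOn_exp_mul_Ioi (neg_neg_of_pos hc) τ)

theorem integral_Ici_exp_neg_mul {c : ℝ} (hc : 0 < c) (τ : ℝ) :
    ∫ σ in Ici τ, exp (-c * σ) = c⁻¹ * exp (-c * τ) := by
  rw [integral_Ici_eq_integral_Ioi, integral_exp_mul_Ioi (neg_neg_of_pos hc), neg_div_neg_eq,
    div_eq_inv_mul]

namespace HasExpDecayRate

variable {f g : ℝ → ℝ} {r : ℝ}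

theorem of_bounds {ε₀ : ℝ} (hε₀ : 0 < ε₀)
    (H : ∀ ε ∈ Ioo 0 ε₀, ∃ c₁ > 0, ∃ c₂, ∀ᶠ τ in atTop,
      c₁ * exp (-(r + ε) * τ) ≤ g τ ∧ g τ ≤ c₂ * exp (-(r - ε) * τ)) :
    HasExpDecayRate g r := by
  intro ε hε
  set ε' := min (ε / 2) (ε₀ / 2)
  have hε'ε : ε' < ε := (min_le_left _ _).trans_lt (half_lt_self hε)
  have hε' : ε' ∈ Ioo 0 ε₀ := ⟨by positivity, (min_le_right _ _).trans_lt (half_lt_self hε₀)⟩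
  obtain ⟨c₁, hc₁, c₂, hbounds⟩ := H ε' hε'
  filter_upwards [hbounds, eventually_mul_exp_le_exp c₁⁻¹ (a := -(r + ε)) (b := -(r + ε'))
    (by linarith), eventually_mul_exp_le_exp c₂ (a := -(r - ε')) (b := -(r - ε)) (by linarith)]
    with τ hg hlower hupper
  exact ⟨((inv_mul_le_iff₀ hc₁).1 hlower).trans hg.1, hg.2.trans hupper⟩

theorem of_tendsto
    (hfast : ∀ ε > 0, Tendsto (fun τ => exp ((r + ε) * τ) * g τ) atTop atTop)
    (hslow : ∀ ε > 0, Tendsto (fun τ => exp ((r - ε) * τ) * g τ) atTop (𝓝 0)) :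
    HasExpDecayRate g r := by
  intro ε hε
  filter_upwards [(hfast ε hε).eventually_ge_atTop 1,
    (hslow ε hε).eventually (gt_mem_nhds one_pos)] with τ hlower hupper
  constructor
  · rwa [← div_le_iff₀' (exp_pos _), one_div, ← exp_neg, ← neg_mul] at hlower
  · rw [← lt_div_iff₀' (exp_pos _), one_div, ← exp_neg, ← neg_mul] at hupper
    exact hupper.le

theorem eventually_pos (hg : HasExpDecayRate g r) : ∀ᶠ τ in atTop, 0 < g τ :=
  (hg 1 one_pos).mono fun _ hτ => (exp_pos _).trans_le hτ.1

theorem tendsto_atTop (hg : HasExpDecayRate g r) {ε : ℝ} (hε : 0 < ε) :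
    Tendsto (fun τ => exp ((r + ε) * τ) * g τ) atTop atTop := by
  refine tendsto_atTop_mono' atTop ?_
    (tendsto_exp_atTop.comp (tendsto_id.const_mul_atTop (half_pos hε)))
  filter_upwards [hg (ε / 2) (half_pos hε)] with τ hτ
  calc exp (ε / 2 * τ) = exp ((r + ε) * τ) * exp (-(r + ε / 2) * τ) := by
        rw [← exp_add]; ring_nf
    _ ≤ exp ((r + ε) * τ) * g τ := by gcongr; exact hτ.1

theorem tendsto_zero (hg : HasExpDecayRate g r) {ε : ℝ} (hε : 0 < ε) :
    Tendsto (fun τ => exp ((r - ε) * τ) * g τ) atTop (𝓝 0) := by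
  refine squeeze_zero' ?_ ?_ (tendsto_exp_atBot.comp
    (tendsto_id.const_mul_atTop_of_neg (neg_neg_of_pos (half_pos hε))))
  · filter_upwards [hg.eventually_pos] with τ hτ
    positivity
  · filter_upwards [hg (ε / 2) (half_pos hε)] with τ hτ
    calc exp ((r - ε) * τ) * g τ ≤ exp ((r - ε) * τ) * exp (-(r - ε / 2) * τ) := by
          gcongr; exact hτ.2
      _ = exp (-(ε / 2) * τ) := by rw [← exp_add]; ring_nf

theorem tendsto_log_div (hg : HasExpDecayRate g r) :
    Tendsto (fun τ => log (g τ) / τ) atTop (𝓝 (-r)) := by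
  have hbound : ∀ ε > 0, ∀ᶠ τ in atTop,
      -(r + ε) ≤ log (g τ) / τ ∧ log (g τ) / τ ≤ -(r - ε) := by
    intro ε hε
    filter_upwards [hg ε hε, eventually_gt_atTop 0] with τ hτ hτ0
    have hlower := log_le_log (exp_pos _) hτ.1
    have hupper := log_le_log ((exp_pos _).trans_le hτ.1) hτ.2
    rw [log_exp] at hlower hupper
    exact ⟨(le_div_iff₀ hτ0).2 hlower, (div_le_iff₀ hτ0).2 hupper⟩
  refine tendsto_order.2 ⟨fun a ha => ?_, fun b hb => ?_⟩
  · filter_upwards [hbound _ (half_pos (sub_pos.2 ha))] with τ hτ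
    linarith [hτ.1]
  · filter_upwards [hbound _ (half_pos (sub_pos.2 hb))] with τ hτ
    linarith [hτ.2]

theorem rpow (hg : HasExpDecayRate g r) {k : ℝ} (hk : 0 < k) :
    HasExpDecayRate (fun τ => g τ ^ k) (k * r) := by
  intro ε hε
  filter_upwards [hg (ε / k) (div_pos hε hk)] with τ hτ
  have hexp : ∀ s, exp (-(r + s / k) * τ) ^ k = exp (-(k * r + s) * τ) := fun s => by
    rw [← exp_mul]; field_simp
  constructor
  · rw [← hexp]
    exact rpow_le_rpow (exp_pos _).le hτ.1 hk.le
  · have hexp' := hexp (-ε)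
    rw [neg_div, ← sub_eq_add_neg, ← sub_eq_add_neg] at hexp'
    rw [← hexp']
    exact rpow_le_rpow ((exp_pos _).le.trans hτ.1) hτ.2 hk.le

theorem mul_of_mem_Icc (hg : HasExpDecayRate g r) {q : ℝ → ℝ} {a b : ℝ} (ha : 0 < a)
    (hq : ∀ᶠ τ in atTop, q τ ∈ Icc a b) :
    HasExpDecayRate (fun τ => q τ * g τ) r := by
  refine of_bounds one_pos fun ε hε => ⟨a, ha, b, ?_⟩
  filter_upwards [hg ε hε.1, hq, hg.eventually_pos] with τ hτ hqτ hgτ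
  exact ⟨mul_le_mul hqτ.1 hτ.1 (exp_pos _).le (ha.le.trans hqτ.1),
    mul_le_mul hqτ.2 hτ.2 hgτ.le (ha.le.trans (hqτ.1.trans hqτ.2))⟩

theorem integrableOn_Ici (hf : HasExpDecayRate f r) (hr : 0 < r) {a : ℝ}
    (hloc : LocallyIntegrableOn f (Ici a)) : IntegrableOn f (Ici a) := by
  obtain ⟨M, hM⟩ := eventually_atTop.1 (hf (r / 2) (half_pos hr))
  have hsplit : Icc a (max M a) ∪ Ici (max M a) = Ici a := Icc_union_Ici_eq_Ici (le_max_right _ _)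
  have hsub : Ici (max M a) ⊆ Ici a := Ici_subset_Ici.2 (le_max_right _ _)
  rw [← hsplit]
  refine (hloc.integrableOn_compact_subset Icc_subset_Ici_self isCompact_Icc).union ?_
  refine (integrableOn_Ici_exp_neg_mul (by linarith : 0 < r - r / 2) _).mono'
    (hloc.mono_set hsub).aestronglyMeasurable ((ae_restrict_iff' measurableSet_Ici).2
      (ae_of_all _ fun σ hσ => ?_))
  have hσ := hM σ ((le_max_left _ _).trans hσ)
  rw [norm_of_nonneg ((exp_pos _).le.trans hσ.1)]
  exact hσ.2

theorem integral_Ici (hf : HasExpDecayRate f r) (hr : 0 < r) {a : ℝ}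
    (hloc : LocallyIntegrableOn f (Ici a)) :
    HasExpDecayRate (fun τ => ∫ σ in Ici τ, f σ) r := by
  refine of_bounds hr fun ε hε => ⟨(r + ε)⁻¹, inv_pos.2 (by linarith [hε.1]), (r - ε)⁻¹, ?_⟩
  obtain ⟨M, hM⟩ := eventually_atTop.1 (hf ε hε.1)
  filter_upwards [eventually_ge_atTop (max M a)] with τ hτ
  have hfτ : IntegrableOn f (Ici τ) :=
    hf.integrableOn_Ici hr (hloc.mono_set (Ici_subset_Ici.2 ((le_max_right _ _).trans hτ)))
  have hbd : ∀ σ ∈ Ici τ, exp (-(r + ε) * σ) ≤ f σ ∧ f σ ≤ exp (-(r - ε) * σ) :=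
    fun σ hσ => hM σ ((le_max_left _ _).trans (hτ.trans hσ))
  constructor
  · rw [← integral_Ici_exp_neg_mul (by linarith [hε.1] : 0 < r + ε)]
    exact setIntegral_mono_on (integrableOn_Ici_exp_neg_mul (by linarith [hε.1]) τ) hfτ
      measurableSet_Ici fun σ hσ => (hbd σ hσ).1
  · rw [← integral_Ici_exp_neg_mul (sub_pos.2 hε.2)]
    exact setIntegral_mono_on hfτ (integrableOn_Ici_exp_neg_mul (sub_pos.2 hε.2) τ)
      measurableSet_Ici fun σ hσ => (hbd σ hσ).2

end HasExpDecayRate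

theorem tail_integral_rate_general
    (k lam δ : ℝ) (hk : 0 < k) (hlam : 0 < lam) (hδ0 : 0 < δ)
    (h qt : ℝ → ℝ)
    (hh : ContinuousOn h (Ici 0)) (hq : ContinuousOn qt (Ici 0))
    (hqmem : ∀ τ ∈ Ici (0 : ℝ), qt τ ∈ Icc δ 1)
    (hfast : ∀ ε > (0 : ℝ),
      Tendsto (fun τ => Real.exp ((lam + ε) * τ) * h τ) atTop atTop)
    (hslow : ∀ ε > (0 : ℝ),
      Tendsto (fun τ => Real.exp ((lam - ε) * τ) * h τ) atTop (𝓝 0)) :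
    (∀ τ ≥ (0 : ℝ), IntegrableOn (fun σ => qt σ * h σ ^ k) (Ici τ)) ∧
    (∀ ε > (0 : ℝ),
      Tendsto (fun τ => Real.exp ((k * lam + ε) * τ) * ∫ σ in Ici τ, qt σ * h σ ^ k)
        atTop atTop) ∧
    (∀ ε > (0 : ℝ),
      Tendsto (fun τ => Real.exp ((k * lam - ε) * τ) * ∫ σ in Ici τ, qt σ * h σ ^ k)
        atTop (𝓝 0)) ∧
    Tendsto (fun τ => Real.log (∫ σ in Ici τ, qt σ * h σ ^ k) / τ)
      atTop (𝓝 (-(k * lam))) := by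
  have hr : 0 < k * lam := mul_pos hk hlam
  have hdecay : HasExpDecayRate (fun σ => qt σ * h σ ^ k) (k * lam) :=
    ((HasExpDecayRate.of_tendsto hfast hslow).rpow hk).mul_of_mem_Icc hδ0
      ((eventually_ge_atTop 0).mono hqmem)
  have hloc : LocallyIntegrableOn (fun σ => qt σ * h σ ^ k) (Ici 0) :=
    (hq.mul (hh.rpow_const fun _ _ => Or.inr hk.le)).locallyIntegrableOn measurableSet_Ici
  have htail := hdecay.integral_Ici hr hloc
  exact ⟨fun τ hτ => hdecay.integrableOn_Ici hr (hloc.mono_set (Ici_subset_Ici.2 hτ)),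
    fun ε hε => htail.tendsto_atTop hε, fun ε hε => htail.tendsto_zero hε,
    htail.tendsto_log_div⟩

/-- (Analytic core of the blow-up rate computation.)
If `h : [0,∞) → (0,1]` decays exactly like `e^{-λτ}` up to sub-exponential factors
(i.e. `e^{(λ+ε)τ} h(τ) → ∞` and `e^{(λ-ε)τ} h(τ) → 0` for every `ε > 0`) and
`q̃ : [0,∞) → [δ,1]`, both continuous, then for every `τ ≥ 0` the tail integral
`T(τ) = ∫_τ^∞ q̃(σ) h(σ)^k dσ` is finite, `e^{(kλ+ε)τ} T(τ) → ∞` and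
`e^{(kλ-ε)τ} T(τ) → 0` for every `ε > 0`; equivalently `(ln T(τ))/τ → -kλ`. -/
theorem tail_integral_rate
    (k lam δ : ℝ) (hk : 0 < k) (hlam : 0 < lam) (hδ0 : 0 < δ) (hδ1 : δ ≤ 1)
    (h qt : ℝ → ℝ)
    (hh : ContinuousOn h (Ici 0)) (hq : ContinuousOn qt (Ici 0))
    (hhmem : ∀ τ ∈ Ici (0 : ℝ), h τ ∈ Ioc (0 : ℝ) 1)
    (hqmem : ∀ τ ∈ Ici (0 : ℝ), qt τ ∈ Icc δ 1)
    (hfast : ∀ ε > (0 : ℝ),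
      Tendsto (fun τ => Real.exp ((lam + ε) * τ) * h τ) atTop atTop)
    (hslow : ∀ ε > (0 : ℝ),
      Tendsto (fun τ => Real.exp ((lam - ε) * τ) * h τ) atTop (𝓝 0)) :
    (∀ τ ≥ (0 : ℝ), IntegrableOn (fun σ => qt σ * h σ ^ k) (Ici τ)) ∧
    (∀ ε > (0 : ℝ),
      Tendsto (fun τ => Real.exp ((k * lam + ε) * τ) * ∫ σ in Ici τ, qt σ * h σ ^ k)
        atTop atTop) ∧
    (∀ ε > (0 : ℝ),
      Tendsto (fun τ => Real.exp ((k * lam - ε) * τ) * ∫ σ in Ici τ, qt σ * h σ ^ k)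
        atTop (𝓝 0)) ∧
    Tendsto (fun τ => Real.log (∫ σ in Ici τ, qt σ * h σ ^ k) / τ)
      atTop (𝓝 (-(k * lam))) :=
  tail_integral_rate_general k lam δ hk hlam hδ0 h qt hh hq hqmem hfast hslow
end

section
/- Let n ≥ 1, fix a type α with index set I_α, exponents β_i and common value c, let p, q be the associated functionals, and let k, λ > 0 and t₀ ∈ ℝ. Suppose x : [0,∞) → ℝⁿ is continuous with p(x(τ)) < 1 for all τ, set h(τ) := 1 − p(x(τ))^{2c}, and assume that for every ε > 0, e^{(λ+ε)τ}·h(τ) → +∞ and e^{(λ−ε)τ}·h(τ) → 0 as τ → ∞. Define t(τ) := t₀ + ∫₀^τ q(x(σ))·h(σ)^k dσ; then t_max := lim_{τ→∞} t(τ) is finite. Let P(τ) := p(x(τ))/h(τ), which equals p(y(τ)) for the point y(τ) with components y_j(τ) = h(τ)^{−α_j}·x_j(τ). Then for every ε > 0, (t_max − t(τ))^{1/k+ε}·P(τ) → 0 and (t_max − t(τ))^{1/k−ε}·P(τ) → +∞ as τ → ∞; that is, the blow-up is of type I: p(y(t)) behaves like (t_max − t)^{−1/k} up to a factor that is sub-polynomial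 in −ln(t_max − t). -/
open Real Set MeasureTheory Filter Topology intervalIntegral

/-!
Write `h(τ) = 1 - p(x(τ))^{2c}`. All the quantities involved grow or decay exponentially up to
sub-exponential factors, i.e. have an exponential rate `lim log g(τ) / τ`, and such rates add
under products, scale under powers, and are inherited by tail integrals of decaying functions.
The hypotheses say that `h` has rate `-λ`. Since `1/(2c) ≤ q ≤ 1`, the integrand `q h^k` of `t`
has rate `-kλ`, hence so does the tail `t_max - t(τ) = ∫_τ^∞ q h^k`. As `h → 0`, `p → 1`, so
`P = p / h` has rate `λ`. Therefore `(t_max - t)^s P` has rate `(1 - sk) λ`, which is negative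
for `s = 1/k + ε` and positive for `s = 1/k - ε`.
-/

/-- `g τ = exp ((μ + o(1)) τ)` as `τ → ∞`. -/
def HasExpGrowthRate (g : ℝ → ℝ) (μ : ℝ) : Prop :=
  (∀ᶠ τ in atTop, 0 < g τ) ∧ Tendsto (fun τ => log (g τ) / τ) atTop (𝓝 μ)

section ExpGrowthRate

variable {f g u : ℝ → ℝ} {μ ν : ℝ}

theorem hasExpGrowthRate_of_exp_bounds
    (h : ∀ᶠ ε in 𝓝[>] 0, ∃ C > 0, ∃ D > 0, ∀ᶠ τ in atTop,
      C * exp ((μ - ε) * τ) ≤ g τ ∧ g τ ≤ D * exp ((μ + ε) * τ)) :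
    HasExpGrowthRate g μ := by
  refine ⟨?_, Metric.tendsto_nhds.2 fun δ hδ => ?_⟩
  · obtain ⟨ε, C, hC, D, -, hb⟩ := h.exists
    filter_upwards [hb] with τ hτ using (by positivity : 0 < C * exp _).trans_le hτ.1
  obtain ⟨ε, ⟨C, hC, D, hD, hb⟩, hε, hεδ⟩ := (h.and (Ioo_mem_nhdsGT (half_pos hδ))).exists
  filter_upwards [hb, eventually_gt_atTop 0,
    eventually_gt_atTop (2 * (|log C| + |log D|) / δ)] with τ ⟨hlow, hup⟩ hτ hτ_large
  have hgτ : 0 < g τ := (by positivity : 0 < C * exp _).trans_le hlow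
  have hlog_low : log C + (μ - ε) * τ ≤ log (g τ) := by
    simpa [log_mul hC.ne' (exp_pos _).ne'] using log_le_log (by positivity) hlow
  have hlog_up : log (g τ) ≤ log D + (μ + ε) * τ := by
    simpa [log_mul hD.ne' (exp_pos _).ne'] using log_le_log hgτ hup
  rw [div_lt_iff₀ hδ] at hτ_large
  have hετ : ε * τ < δ / 2 * τ := mul_lt_mul_of_pos_right hεδ hτ
  rw [Real.dist_eq, abs_sub_lt_iff, div_sub' hτ.ne', sub_div' hτ.ne', div_lt_iff₀ hτ,
    div_lt_iff₀ hτ]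
  constructor <;> nlinarith [neg_abs_le (log C), le_abs_self (log D), abs_nonneg (log C),
    abs_nonneg (log D)]

namespace HasExpGrowthRate

theorem congr' (hg : HasExpGrowthRate g μ) (hgf : g =ᶠ[atTop] f) : HasExpGrowthRate f μ :=
  ⟨(hg.1.and hgf).mono fun τ hτ => hτ.2 ▸ hτ.1, hg.2.congr' (hgf.mono fun τ hτ => by rw [hτ])⟩

theorem rpow (hg : HasExpGrowthRate g μ) (s : ℝ) :
    HasExpGrowthRate (fun τ => g τ ^ s) (s * μ) := by
  refine ⟨hg.1.mono fun τ hτ => rpow_pos_of_pos hτ s, (hg.2.const_mul s).congr' ?_⟩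
  filter_upwards [hg.1] with τ hτ
  rw [log_rpow hτ, mul_div_assoc]

theorem mul (hf : HasExpGrowthRate f μ) (hg : HasExpGrowthRate g ν) :
    HasExpGrowthRate (fun τ => f τ * g τ) (μ + ν) := by
  refine ⟨(hf.1.and hg.1).mono fun τ hτ => mul_pos hτ.1 hτ.2, (hf.2.add hg.2).congr' ?_⟩
  filter_upwards [hf.1, hg.1] with τ hfτ hgτ
  rw [log_mul hfτ.ne' hgτ.ne', add_div]

theorem inv (hg : HasExpGrowthRate g μ) : HasExpGrowthRate (fun τ => (g τ)⁻¹) (-μ) :=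
  ⟨hg.1.mono fun τ hτ => inv_pos.2 hτ, by simpa only [log_inv, neg_div] using hg.2.neg⟩

theorem of_const_mul_le_of_le {C : ℝ} (hu : HasExpGrowthRate u μ) (hC : 0 < C)
    (hlow : ∀ᶠ τ in atTop, C * u τ ≤ g τ) (hup : ∀ᶠ τ in atTop, g τ ≤ u τ) :
    HasExpGrowthRate g μ := by
  have hCu : ∀ᶠ τ in atTop, 0 < C * u τ := hu.1.mono fun τ hτ => mul_pos hC hτ
  refine ⟨(hCu.and hlow).mono fun τ hτ => hτ.1.trans_le hτ.2, ?_⟩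
  have hlog_C : Tendsto (fun τ => log C / τ + log (u τ) / τ) atTop (𝓝 (0 + μ)) :=
    (tendsto_const_nhds.div_atTop tendsto_id).add hu.2
  rw [zero_add] at hlog_C
  refine tendsto_of_tendsto_of_tendsto_of_le_of_le' hlog_C hu.2 ?_ ?_ <;>
    filter_upwards [hu.1, hCu, hlow, hup, eventually_gt_atTop 0] with τ huτ hCuτ hlowτ hupτ hτ
  · rw [← add_div, ← log_mul hC.ne' huτ.ne']
    exact div_le_div_of_nonneg_right (log_le_log hCuτ hlowτ) hτ.le
  · exact div_le_div_of_nonneg_right (log_le_log (hCuτ.trans_le hlowτ) hupτ) hτ.le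

theorem eventually_le_exp (hg : HasExpGrowthRate g μ) {ε : ℝ} (hε : 0 < ε) :
    ∀ᶠ τ in atTop, g τ ≤ exp ((μ + ε) * τ) := by
  filter_upwards [hg.1, hg.2.eventually_lt_const (lt_add_of_pos_right μ hε),
    eventually_gt_atTop 0] with τ hgτ hlt hτ
  rw [div_lt_iff₀ hτ] at hlt
  rw [← exp_log hgτ]
  exact exp_le_exp.2 hlt.le

theorem eventually_exp_le (hg : HasExpGrowthRate g μ) {ε : ℝ} (hε : 0 < ε) :
    ∀ᶠ τ in atTop, exp ((μ - ε) * τ) ≤ g τ := by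
  filter_upwards [hg.1, hg.2.eventually_const_lt (sub_lt_self μ hε),
    eventually_gt_atTop 0] with τ hgτ hlt hτ
  rw [lt_div_iff₀ hτ] at hlt
  rw [← exp_log hgτ]
  exact exp_le_exp.2 hlt.le

theorem tendsto_zero (hg : HasExpGrowthRate g μ) (hμ : μ < 0) : Tendsto g atTop (𝓝 0) := by
  have hexp : Tendsto (fun τ => exp ((μ + -μ / 2) * τ)) atTop (𝓝 0) :=
    tendsto_exp_atBot.comp (tendsto_id.const_mul_atTop_of_neg (by linarith))
  exact tendsto_of_tendsto_of_tendsto_of_le_of_le' tendsto_const_nhds hexp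
    (hg.1.mono fun τ hτ => hτ.le) (hg.eventually_le_exp (by linarith))

theorem tendsto_atTop (hg : HasExpGrowthRate g μ) (hμ : 0 < μ) : Tendsto g atTop atTop :=
  tendsto_atTop_mono' _ (hg.eventually_exp_le (half_pos hμ))
    (tendsto_exp_atTop.comp (tendsto_id.const_mul_atTop (by linarith)))

theorem integrableOn_Ioi {a : ℝ} (hg : HasExpGrowthRate g μ) (hμ : μ < 0)
    (hcont : ContinuousOn g (Ici a)) : IntegrableOn g (Ioi a) := by
  refine integrable_of_isBigO_exp_neg (b := -μ / 2) (by linarith) hcont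
    (Asymptotics.IsBigO.of_bound 1 ?_)
  filter_upwards [hg.1, hg.eventually_le_exp (ε := -μ / 2) (by linarith)] with τ hgτ hle
  rw [norm_of_nonneg hgτ.le, norm_of_nonneg (exp_pos _).le, one_mul]
  convert hle using 2
  ring

theorem integral_Ioi {a : ℝ} (hg : HasExpGrowthRate g μ) (hμ : μ < 0)
    (hint : IntegrableOn g (Ioi a)) :
    HasExpGrowthRate (fun τ => ∫ σ in Ioi τ, g σ) μ := by
  refine hasExpGrowthRate_of_exp_bounds ?_
  filter_upwards [Ioo_mem_nhdsGT (neg_pos.2 hμ)] with ε ⟨hε, hεμ⟩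
  obtain ⟨T, hT⟩ := eventually_atTop.1 ((hg.eventually_exp_le hε).and (hg.eventually_le_exp hε))
  refine ⟨(ε - μ)⁻¹, inv_pos.2 (by linarith), (-(μ + ε))⁻¹, inv_pos.2 (by linarith), ?_⟩
  filter_upwards [eventually_ge_atTop (max a T)] with τ hτ
  have hint_τ : IntegrableOn g (Ioi τ) := hint.mono_set (Ioi_subset_Ioi (le_of_max_le_left hτ))
  have hbounds : ∀ σ ∈ Ioi τ, exp ((μ - ε) * σ) ≤ g σ ∧ g σ ≤ exp ((μ + ε) * σ) :=
    fun σ hσ => hT σ ((le_of_max_le_right hτ).trans (le_of_lt hσ))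
  constructor
  · calc (ε - μ)⁻¹ * exp ((μ - ε) * τ) = ∫ σ in Ioi τ, exp ((μ - ε) * σ) := by
          rw [integral_exp_mul_Ioi (by linarith), neg_div, ← div_neg, neg_sub, div_eq_inv_mul]
      _ ≤ ∫ σ in Ioi τ, g σ := setIntegral_mono_on (integrableOn_exp_mul_Ioi (by linarith) τ)
          hint_τ measurableSet_Ioi fun σ hσ => (hbounds σ hσ).1
  · calc ∫ σ in Ioi τ, g σ ≤ ∫ σ in Ioi τ, exp ((μ + ε) * σ) :=
          setIntegral_mono_on hint_τ (integrableOn_exp_mul_Ioi (by linarith) τ)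
            measurableSet_Ioi fun σ hσ => (hbounds σ hσ).2
      _ = (-(μ + ε))⁻¹ * exp ((μ + ε) * τ) := by
          rw [integral_exp_mul_Ioi (by linarith), neg_div, ← div_neg, div_eq_inv_mul]

end HasExpGrowthRate

end ExpGrowthRate

theorem hasExpGrowthRate_neg_of_tendsto {h : ℝ → ℝ} {lam : ℝ}
    (hup : ∀ ε > (0 : ℝ), Tendsto (fun τ => exp ((lam + ε) * τ) * h τ) atTop atTop)
    (hdown : ∀ ε > (0 : ℝ), Tendsto (fun τ => exp ((lam - ε) * τ) * h τ) atTop (𝓝 0)) :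
    HasExpGrowthRate h (-lam) := by
  refine hasExpGrowthRate_of_exp_bounds (eventually_nhdsWithin_of_forall fun ε hε => ?_)
  refine ⟨1, one_pos, 1, one_pos, ?_⟩
  filter_upwards [(hup ε hε).eventually_ge_atTop 1, (hdown ε hε).eventually_lt_const one_pos]
    with τ hge hlt
  have hlow : exp ((-lam - ε) * τ) = (exp ((lam + ε) * τ))⁻¹ := by rw [← exp_neg]; ring_nf
  have hupper : exp ((-lam + ε) * τ) = (exp ((lam - ε) * τ))⁻¹ := by rw [← exp_neg]; ring_nf
  constructor
  · rw [one_mul, hlow, ← one_div, div_le_iff₀ (exp_pos _), mul_comm]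
    exact hge
  · rw [one_mul, hupper, ← one_div, le_div_iff₀ (exp_pos _), mul_comm]
    exact hlt.le

section QuasiParabolic

variable {n : ℕ} (Iα : Finset (Fin n)) (β : Fin n → ℕ) (c : ℕ)

theorem pQH_nonneg (x : Fin n → ℝ) : 0 ≤ pQH Iα β c x :=
  rpow_nonneg (Finset.sum_nonneg fun i _ => (even_two_mul (β i)).pow_nonneg _) _

theorem continuous_pQH : Continuous (pQH Iα β c) :=
  (continuous_rpow_const (by positivity)).comp
    (continuous_finsetSum _ fun i _ => (continuous_apply i).pow _)

theorem continuous_qQH : Continuous (qQH Iα β c) :=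
  continuous_const.sub (continuous_const.mul (continuous_const.sub
    ((continuous_rpow_const (by positivity)).comp (continuous_pQH Iα β c))))

variable {Iα β c}

theorem one_sub_pQH_rpow_pos (hc : 0 < c) {x : Fin n → ℝ} (hx : pQH Iα β c x < 1) :
    0 < 1 - pQH Iα β c x ^ (2 * (c : ℝ)) :=
  sub_pos.2 (rpow_lt_one (pQH_nonneg Iα β c x) hx (by positivity))

theorem inv_two_mul_le_qQH (hc : 0 < c) (x : Fin n → ℝ) : (2 * (c : ℝ))⁻¹ ≤ qQH Iα β c x := by
  have hc' : (1 : ℝ) ≤ c := by exact_mod_cast hc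
  have hpow : 0 ≤ pQH Iα β c x ^ (2 * (c : ℝ)) := rpow_nonneg (pQH_nonneg Iα β c x) _
  have hinv : (2 * (c : ℝ))⁻¹ ≤ 1 := inv_le_one_of_one_le₀ (by linarith)
  rw [qQH, show (2 * (c : ℝ) - 1) / (2 * c) = 1 - (2 * (c : ℝ))⁻¹ by field_simp]
  nlinarith

theorem qQH_le_one (hc : 0 < c) {x : Fin n → ℝ} (hx : pQH Iα β c x ≤ 1) : qQH Iα β c x ≤ 1 := by
  have hc' : (1 : ℝ) ≤ c := by exact_mod_cast hc
  have hpow : pQH Iα β c x ^ (2 * (c : ℝ)) ≤ 1 :=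
    rpow_le_one (pQH_nonneg Iα β c x) hx (by positivity)
  have hcoeff : 0 ≤ (2 * (c : ℝ) - 1) / (2 * c) := div_nonneg (by linarith) (by positivity)
  rw [qQH]
  nlinarith

variable {x : ℝ → Fin n → ℝ}

theorem continuousOn_qQH_mul_rpow {s : Set ℝ} (hx : ContinuousOn x s) {k : ℝ} (hk : 0 ≤ k) :
    ContinuousOn (fun τ => qQH Iα β c (x τ) * (1 - pQH Iα β c (x τ) ^ (2 * (c : ℝ))) ^ k) s :=
  ((continuous_qQH Iα β c).comp_continuousOn hx).mul <| ContinuousOn.rpow_const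
    (((continuous_const.sub ((continuous_rpow_const (by positivity)).comp
      (continuous_pQH Iα β c))).comp_continuousOn hx)) fun _ _ => Or.inr hk

theorem hasExpGrowthRate_qQH_mul_rpow (hc : 0 < c)
    (hxin : ∀ τ ∈ Ici (0 : ℝ), pQH Iα β c (x τ) < 1) {μ : ℝ}
    (hh : HasExpGrowthRate (fun τ => 1 - pQH Iα β c (x τ) ^ (2 * (c : ℝ))) μ) (k : ℝ) :
    HasExpGrowthRate
      (fun τ => qQH Iα β c (x τ) * (1 - pQH Iα β c (x τ) ^ (2 * (c : ℝ))) ^ k) (k * μ) := by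
  refine (hh.rpow k).of_const_mul_le_of_le (C := (2 * (c : ℝ))⁻¹) (by positivity) ?_ ?_ <;>
    filter_upwards [eventually_ge_atTop 0] with τ hτ
  · exact mul_le_mul_of_nonneg_right (inv_two_mul_le_qQH hc _)
      (rpow_nonneg (one_sub_pQH_rpow_pos hc (hxin τ hτ)).le k)
  · exact mul_le_of_le_one_left (rpow_nonneg (one_sub_pQH_rpow_pos hc (hxin τ hτ)).le k)
      (qQH_le_one hc (hxin τ hτ).le)

/-- Near the horizon `p → 1`, so `p / h` grows like `1 / h`. -/
theorem hasExpGrowthRate_pQH_div (hc : 0 < c)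
    (hxin : ∀ τ ∈ Ici (0 : ℝ), pQH Iα β c (x τ) < 1) {μ : ℝ}
    (hh : HasExpGrowthRate (fun τ => 1 - pQH Iα β c (x τ) ^ (2 * (c : ℝ))) μ) (hμ : μ < 0) :
    HasExpGrowthRate
      (fun τ => pQH Iα β c (x τ) / (1 - pQH Iα β c (x τ) ^ (2 * (c : ℝ)))) (-μ) := by
  refine hh.inv.of_const_mul_le_of_le (C := 1 / 2) one_half_pos ?_ ?_
  · filter_upwards [(hh.tendsto_zero hμ).eventually_lt_const one_half_pos,
      eventually_ge_atTop 0] with τ hsmall hτ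
    have hp_ge : pQH Iα β c (x τ) ^ (2 * (c : ℝ)) ≤ pQH Iα β c (x τ) :=
      rpow_le_self_of_le_one (pQH_nonneg Iα β c _) (hxin τ hτ).le (by norm_cast; omega)
    rw [← div_eq_mul_inv]
    exact div_le_div_of_nonneg_right (by linarith) (one_sub_pQH_rpow_pos hc (hxin τ hτ)).le
  · filter_upwards [eventually_ge_atTop 0] with τ hτ
    rw [← one_div]
    exact div_le_div_of_nonneg_right (hxin τ hτ).le (one_sub_pQH_rpow_pos hc (hxin τ hτ)).le

end QuasiParabolic

theorem typeI_blowup_rate_general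
    {n : ℕ}
    (Iα : Finset (Fin n))
    (c : ℕ) (hc : 0 < c)
    (β : Fin n → ℕ)
    (k lam t₀ : ℝ) (hk : 0 < k) (hlam : 0 < lam)
    (x : ℝ → Fin n → ℝ) (hx : ContinuousOn x (Ici 0))
    (hxin : ∀ τ ∈ Ici (0 : ℝ), pQH Iα β c (x τ) < 1) :
    let h : ℝ → ℝ := fun τ => 1 - pQH Iα β c (x τ) ^ (2 * (c : ℝ))
    let t : ℝ → ℝ := fun τ => t₀ + ∫ σ in (0 : ℝ)..τ, qQH Iα β c (x σ) * h σ ^ k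
    let P : ℝ → ℝ := fun τ => pQH Iα β c (x τ) / h τ
    (∀ ε > (0 : ℝ),
      Tendsto (fun τ => Real.exp ((lam + ε) * τ) * h τ) atTop atTop) →
    (∀ ε > (0 : ℝ),
      Tendsto (fun τ => Real.exp ((lam - ε) * τ) * h τ) atTop (𝓝 0)) →
    ∃ tmax : ℝ,
      Tendsto t atTop (𝓝 tmax) ∧
      ∀ ε > (0 : ℝ),
        Tendsto (fun τ => (tmax - t τ) ^ (1 / k + ε) * P τ) atTop (𝓝 0) ∧
        Tendsto (fun τ => (tmax - t τ) ^ (1 / k - ε) * P τ) atTop atTop := by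
  intro h t P hup hdown
  have hh : HasExpGrowthRate h (-lam) := hasExpGrowthRate_neg_of_tendsto hup hdown
  set f : ℝ → ℝ := fun σ => qQH Iα β c (x σ) * h σ ^ k
  have hf : HasExpGrowthRate f (k * -lam) := hasExpGrowthRate_qQH_mul_rpow hc hxin hh k
  have hf_int : IntegrableOn f (Ioi 0) :=
    hf.integrableOn_Ioi (by nlinarith) (continuousOn_qQH_mul_rpow hx hk.le)
  set tmax := t₀ + ∫ σ in Ioi 0, f σ
  have h_tail : HasExpGrowthRate (fun τ => tmax - t τ) (k * -lam) := by
    refine (hf.integral_Ioi (by nlinarith) hf_int).congr' ?_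
    filter_upwards [eventually_ge_atTop 0] with τ hτ
    change _ = t₀ + _ - (t₀ + ∫ σ in (0 : ℝ)..τ, f σ)
    rw [← integral_Ioi_sub_Ioi hf_int hτ]
    ring
  have hP : HasExpGrowthRate P lam :=
    neg_neg lam ▸ hasExpGrowthRate_pQH_div hc hxin hh (neg_lt_zero.2 hlam)
  have h_rate (s : ℝ) :
      HasExpGrowthRate (fun τ => (tmax - t τ) ^ s * P τ) ((1 - s * k) * lam) := by
    convert (h_tail.rpow s).mul hP using 1
    ring
  refine ⟨tmax, (intervalIntegral_tendsto_integral_Ioi 0 hf_int tendsto_id).const_add t₀,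
    fun ε hε => ⟨(h_rate _).tendsto_zero ?_, (h_rate _).tendsto_atTop ?_⟩⟩
  · rw [show 1 - (1 / k + ε) * k = -(ε * k) by field_simp; ring]
    nlinarith [mul_pos (mul_pos hε hk) hlam]
  · rw [show 1 - (1 / k - ε) * k = ε * k by field_simp; ring]
    positivity

/-- Type-I blow-up rate: if `h(τ) = 1 - p(x(τ))^{2c}` decays exactly
like `e^{-λτ}` up to sub-exponential factors, then `t(τ) = t₀ + ∫₀^τ q(x) h^k` has a
finite limit `t_max`, and with `P(τ) = p(x(τ))/h(τ)` (`= p(y(τ))` for the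
uncompactified solution) one has, for every `ε > 0`,
`(t_max - t(τ))^{1/k+ε} P(τ) → 0` and `(t_max - t(τ))^{1/k-ε} P(τ) → ∞`. -/
theorem typeI_blowup_rate
    {n : ℕ} (hn : 1 ≤ n)
    (α : Fin n → ℕ) (hα : ∃ i, α i ≠ 0)
    (Iα : Finset (Fin n)) (hIα : ∀ i, i ∈ Iα ↔ 0 < α i)
    (c : ℕ) (hc : 0 < c)
    (β : Fin n → ℕ) (hβpos : ∀ i ∈ Iα, 0 < β i)
    (hβ : ∀ i ∈ Iα, α i * β i = c)
    (k lam t₀ : ℝ) (hk : 0 < k) (hlam : 0 < lam)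
    (x : ℝ → Fin n → ℝ) (hx : ContinuousOn x (Ici 0))
    (hxin : ∀ τ ∈ Ici (0 : ℝ), pQH Iα β c (x τ) < 1) :
    let h : ℝ → ℝ := fun τ => 1 - pQH Iα β c (x τ) ^ (2 * (c : ℝ))
    let t : ℝ → ℝ := fun τ => t₀ + ∫ σ in (0 : ℝ)..τ, qQH Iα β c (x σ) * h σ ^ k
    let P : ℝ → ℝ := fun τ => pQH Iα β c (x τ) / h τ
    (∀ ε > (0 : ℝ),
      Tendsto (fun τ => Real.exp ((lam + ε) * τ) * h τ) atTop atTop) →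
    (∀ ε > (0 : ℝ),
      Tendsto (fun τ => Real.exp ((lam - ε) * τ) * h τ) atTop (𝓝 0)) →
    ∃ tmax : ℝ,
      Tendsto t atTop (𝓝 tmax) ∧
      ∀ ε > (0 : ℝ),
        Tendsto (fun τ => (tmax - t τ) ^ (1 / k + ε) * P τ) atTop (𝓝 0) ∧
        Tendsto (fun τ => (tmax - t τ) ^ (1 / k - ε) * P τ) atTop atTop :=
  typeI_blowup_rate_general Iα c hc β k lam t₀ hk hlam x hx hxin
end

section
/- Let n ≥ 1, fix a type α = (α₁,…,αₙ) with index set I_α, exponents β_i and common value c, and let p and q be the associated functionals. For any x ∈ ℝⁿ and any real numbers f̃₁,…,f̃ₙ, define G := Σ_{j∈I_α} (x_j^{2β_j−1}·f̃_j)/α_j and g_j := q(x)·f̃_j − G·α_j·x_j for j = 1,…,n. Then Σ_{j∈I_α} 2β_j·x_j^{2β_j−1}·g_j = 2c·G·(q(x) − p(x)^{2c}) = G·(1 − p(x)^{2c}). In particular this quantity, which is the derivative of p^{2c} along the desingularized vector field g = q(x)·f̃(x) − G(x)·Λ_α x, vanishes whenever p(x) = 1; hence the horizon {p = 1} is invariant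 for any desingularized vector field of this form. -/
open Real Set

/-- For any `x` and any `f̃₁, …, f̃ₙ`, with
`G = ∑_{j∈Iα} x_j^{2βⱼ-1} f̃ⱼ / αⱼ` and `gⱼ = q(x) f̃ⱼ - G αⱼ xⱼ`, one has
`∑_{j∈Iα} 2βⱼ x_j^{2βⱼ-1} gⱼ = 2c G (q(x) - p(x)^{2c}) = G (1 - p(x)^{2c})`;
in particular this derivative of `p^{2c}` along the desingularized vector field
vanishes on the horizon `{p = 1}`, so the horizon is invariant. -/
theorem horizon_invariant
    {n : ℕ} (hn : 1 ≤ n)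
    (α : Fin n → ℕ) (hα : ∃ i, α i ≠ 0)
    (Iα : Finset (Fin n)) (hIα : ∀ i, i ∈ Iα ↔ 0 < α i)
    (c : ℕ) (hc : 0 < c)
    (β : Fin n → ℕ) (hβpos : ∀ i ∈ Iα, 0 < β i)
    (hβ : ∀ i ∈ Iα, α i * β i = c)
    (x ft : Fin n → ℝ) :
    let G : ℝ := ∑ j ∈ Iα, x j ^ (2 * β j - 1) * ft j / (α j : ℝ)
    let g : Fin n → ℝ := fun j => qQH Iα β c x * ft j - G * (α j : ℝ) * x j
    (∑ j ∈ Iα, 2 * (β j : ℝ) * x j ^ (2 * β j - 1) * g j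
        = 2 * (c : ℝ) * G * (qQH Iα β c x - pQH Iα β c x ^ (2 * (c : ℝ)))) ∧
    (2 * (c : ℝ) * G * (qQH Iα β c x - pQH Iα β c x ^ (2 * (c : ℝ)))
        = G * (1 - pQH Iα β c x ^ (2 * (c : ℝ)))) ∧
    (pQH Iα β c x = 1 →
      ∑ j ∈ Iα, 2 * (β j : ℝ) * x j ^ (2 * β j - 1) * g j = 0) := by
  intro G g
  have hG : G = ∑ j ∈ Iα, x j ^ (2 * β j - 1) * ft j / (α j : ℝ) := rfl
  have hc' : (2 * (c : ℝ)) ≠ 0 := by positivity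
  have hSnn : (0:ℝ) ≤ ∑ i ∈ Iα, x i ^ (2 * β i) :=
    Finset.sum_nonneg fun i _ => (even_two_mul (β i)).pow_nonneg _
  have hP : pQH Iα β c x ^ (2 * (c : ℝ)) = ∑ i ∈ Iα, x i ^ (2 * β i) := by
    rw [pQH, ← Real.rpow_mul hSnn, one_div, inv_mul_cancel₀ hc', Real.rpow_one]
  set q : ℝ := qQH Iα β c x with hqdef
  have h1 : ∑ j ∈ Iα, 2 * (β j : ℝ) * x j ^ (2 * β j - 1) * g j
      = 2 * (c : ℝ) * q * G - 2 * (c : ℝ) * G * (∑ i ∈ Iα, x i ^ (2 * β i)) := by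
    rw [hG, Finset.mul_sum, Finset.mul_sum, ← Finset.sum_sub_distrib]
    refine Finset.sum_congr rfl fun j hj => ?_
    have hα0 : (α j : ℝ) ≠ 0 := Nat.cast_ne_zero.2 ((hIα j).1 hj).ne'
    have hcc : (α j : ℝ) * (β j : ℝ) = (c : ℝ) := by exact_mod_cast hβ j hj
    have hpow : x j ^ (2 * β j - 1) * x j = x j ^ (2 * β j) := by
      rw [← pow_succ]
      congr 1
      have := hβpos j hj
      omega
    show 2 * (β j : ℝ) * x j ^ (2 * β j - 1) * (q * ft j - G * (α j : ℝ) * x j)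
        = 2 * (c : ℝ) * q * (x j ^ (2 * β j - 1) * ft j / (α j : ℝ))
          - 2 * (c : ℝ) * G * x j ^ (2 * β j)
    rw [← hcc, ← hpow]
    field_simp
  have h2 : 2 * (c : ℝ) * G * (q - pQH Iα β c x ^ (2 * (c : ℝ)))
      = G * (1 - pQH Iα β c x ^ (2 * (c : ℝ))) := by
    rw [hP, hqdef, qQH, hP]
    field_simp
    ring
  refine ⟨?_, h2, ?_⟩
  · rw [h1, hP]; ring
  · intro hp1
    have hS1 : (∑ i ∈ Iα, x i ^ (2 * β i)) = 1 := by
      rw [← hP, hp1, Real.one_rpow]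
    have hq1 : q = 1 := by rw [hqdef, qQH, hp1, Real.one_rpow]; ring
    rw [h1, hS1, hq1]; ring
end

section
/- Define F : ℝ³ → ℝ³ by F(χ,u,v) = (1, v, 6u² + χ) (the first Painlevé equation u'' = 6u² + t written as an extended autonomous first-order system) and F₀(χ,u,v) = (0, v, 6u²). Then, with type exponents (α₀,α₁,α₂) = (0,2,3) and order k+1 = 2: (i) F₀ is quasi-homogeneous of type (0,2,3) and order 2, i.e. for all s > 0 and (χ,u,v) ∈ ℝ³, F₀(χ, s²u, s³v) = (0, s³·v, s⁴·6u²); (ii) for each component i, s^{−(1+α_i)}·|F_i(χ, s²u, s³v) − s^{1+α_i}·F₀ᵢ(χ,u,v)| → 0 as s → +∞, uniformly for (u,v) with u⁶ + v⁴ = 1 and χ in any compact subset of ℝ. Hence F is asymptotically quasi-homogeneous of type (0,2,3) and order 2 at infinity. -/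
open Real Set Filter

/-- The first Painlevé equation `u'' = 6u² + t` as the extended autonomous system
`(χ, u, v) ↦ (1, v, 6u² + χ)`. -/
noncomputable def FPain (P : ℝ × ℝ × ℝ) : ℝ × ℝ × ℝ :=
  (1, P.2.2, 6 * P.2.1 ^ 2 + P.1)

/-- The quasi-homogeneous principal part `(χ, u, v) ↦ (0, v, 6u²)`. -/
noncomputable def FPain₀ (P : ℝ × ℝ × ℝ) : ℝ × ℝ × ℝ :=
  (0, P.2.2, 6 * P.2.1 ^ 2)

/-- With type `(0,2,3)` and order `2` (`k = 1`):
(i) `FPain₀` is quasi-homogeneous: `FPain₀(χ, s²u, s³v) = (0, s³ v, s⁴ (6u²))`;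
(ii) each component satisfies
`s^{-(1+αᵢ)} |FPainᵢ(χ, s²u, s³v) - s^{1+αᵢ} FPain₀ᵢ(χ,u,v)| → 0` as `s → ∞`,
uniformly on `{u⁶ + v⁴ = 1}` with `χ` in any compact set. Hence the first Painlevé
field is asymptotically quasi-homogeneous of type `(0,2,3)` and order `2`. -/
theorem painleve_asymptotically_quasi_homogeneous :
    (∀ s : ℝ, 0 < s → ∀ χ u v : ℝ,
      FPain₀ (χ, s ^ 2 * u, s ^ 3 * v) = (0, s ^ 3 * v, s ^ 4 * (6 * u ^ 2))) ∧
    (∀ ε > (0 : ℝ), ∀ K : Set ℝ, IsCompact K →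
      ∃ s₀ > (0 : ℝ), ∀ s ≥ s₀, ∀ χ ∈ K, ∀ u v : ℝ, u ^ 6 + v ^ 4 = 1 →
        s ^ (-(1 : ℝ)) *
          |(FPain (χ, s ^ 2 * u, s ^ 3 * v)).1 - s ^ (1 : ℕ) * (FPain₀ (χ, u, v)).1| < ε ∧
        s ^ (-(3 : ℝ)) *
          |(FPain (χ, s ^ 2 * u, s ^ 3 * v)).2.1 - s ^ (3 : ℕ) * (FPain₀ (χ, u, v)).2.1| < ε ∧
        s ^ (-(4 : ℝ)) *
          |(FPain (χ, s ^ 2 * u, s ^ 3 * v)).2.2 - s ^ (4 : ℕ) * (FPain₀ (χ, u, v)).2.2| < ε) := by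
  constructor
  · intro s hs χ u v
    simp only [FPain₀, Prod.mk.injEq, true_and]
    ring
  · intro ε hε K hK
    obtain ⟨M, hM⟩ := hK.isBounded.subset_closedBall 0
    have hεinv : 0 < 1/ε := by positivity
    have hMε : 0 < (|M|+1)/ε := by positivity
    refine ⟨1 + 1/ε + (|M|+1)/ε + 1, by positivity, ?_⟩
    intro s hs χ hχ u v huv
    have hs1 : (1:ℝ) < s := by linarith
    have hspos : (0:ℝ) < s := by linarith
    have hsε : 1/ε < s := by linarith
    have hsM : (|M|+1)/ε < s := by linarith
    have hχM : |χ| ≤ |M| := by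
      have := hM hχ
      simp only [Metric.mem_closedBall, Real.dist_eq, sub_zero] at this
      exact this.trans (le_abs_self M)
    simp only [FPain, FPain₀]
    have e1 : s ^ (-(1:ℝ)) = 1 / s := by
      rw [Real.rpow_neg hspos.le, Real.rpow_one]; ring
    have e4 : s ^ (-(4:ℝ)) = 1 / s^(4:ℕ) := by
      rw [Real.rpow_neg hspos.le, ← Real.rpow_natCast s 4]; norm_num
    have h1ε : 1/s < ε := by
      rw [div_lt_iff₀ hspos]
      rw [div_lt_iff₀ hε] at hsε
      linarith
    refine ⟨?_, ?_, ?_⟩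
    · rw [e1]
      have : |1 - s ^ (1:ℕ) * (0:ℝ)| = 1 := by norm_num
      rw [this, mul_one]
      exact h1ε
    · have : |s ^ 3 * v - s ^ (3:ℕ) * v| = 0 := by norm_num
      rw [this, mul_zero]; exact hε
    · rw [e4]
      have : 6 * (s ^ 2 * u) ^ 2 + χ - s ^ (4:ℕ) * (6 * u ^ 2) = χ := by ring
      rw [this]
      have hMεs : |M| < ε * s := by
        rw [div_lt_iff₀ hε] at hsM
        linarith
      rw [div_mul_eq_mul_div, div_lt_iff₀ (by positivity)]
      calc 1 * |χ| = |χ| := one_mul _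
        _ ≤ |M| := hχM
        _ < ε * s := hMεs
        _ ≤ ε * s ^ (4:ℕ) := by
            have hs4 : s ≤ s ^ (4:ℕ) := by nlinarith [sq_nonneg s, sq_nonneg (s-1), sq_nonneg (s*s-1), mul_pos hspos hspos]
            exact mul_le_mul_of_nonneg_left hs4 hε.le
end

section
/- Fix ε ∈ ℝ and define F : ℝ⁵ → ℝ⁵ by F(χ,u₁,u₂,w₁,w₂) = (ε, u₁² − u₂ − χu₁ − w₁, (1/3)u₁³ − u₁ − χu₂ − w₂, −εu₁, −εu₂) (the Keyfitz–Kranzer–Dafermos regularized system) and F₀(χ,u₁,u₂,w₁,w₂) = (0, u₁² − u₂, (1/3)u₁³, 0, 0). Then, with type exponents (0,1,2,1,2) and order k+1 = 2: (i) F₀ is quasi-homogeneous of type (0,1,2,1,2) and order 2, i.e. for all s > 0, F₀(χ, su₁, s²u₂, sw₁, s²w₂) = (0, s²(u₁² − u₂), s³·(1/3)u₁³, 0, 0); (ii) for each component i with type exponent α_i, s^{−(1+α_i)}·|F_i(χ, su₁, s²u₂, sw₁, s²w₂) − s^{1+α_i}·F₀ᵢ(χ,u₁,u₂,w₁,w₂)|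 → 0 as s → +∞, uniformly for (u₁,u₂,w₁,w₂) with u₁⁴ + u₂² + w₁⁴ + w₂² = 1 and χ in any compact subset of ℝ. Hence F is asymptotically quasi-homogeneous of type (0,1,2,1,2) and order 2 at infinity. -/
open Real Set Filter

/-- The Dafermos-regularized Keyfitz–Kranzer system
`(χ, u₁, u₂, w₁, w₂) ↦ (ε, u₁² - u₂ - χu₁ - w₁, u₁³/3 - u₁ - χu₂ - w₂, -εu₁, -εu₂)`. -/
noncomputable def FKK (ε : ℝ) (P : ℝ × ℝ × ℝ × ℝ × ℝ) : ℝ × ℝ × ℝ × ℝ × ℝ :=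
  (ε,
   P.2.1 ^ 2 - P.2.2.1 - P.1 * P.2.1 - P.2.2.2.1,
   (1 / 3) * P.2.1 ^ 3 - P.2.1 - P.1 * P.2.2.1 - P.2.2.2.2,
   -(ε * P.2.1),
   -(ε * P.2.2.1))

/-- The quasi-homogeneous principal part `(0, u₁² - u₂, u₁³/3, 0, 0)`. -/
noncomputable def FKK₀ (P : ℝ × ℝ × ℝ × ℝ × ℝ) : ℝ × ℝ × ℝ × ℝ × ℝ :=
  (0, P.2.1 ^ 2 - P.2.2.1, (1 / 3) * P.2.1 ^ 3, 0, 0)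

set_option maxHeartbeats 1600000 in
/-- With type `(0,1,2,1,2)` and order `2` (`k = 1`):
(i) `FKK₀` is quasi-homogeneous:
`FKK₀(χ, su₁, s²u₂, sw₁, s²w₂) = (0, s²(u₁² - u₂), s³ u₁³/3, 0, 0)`;
(ii) each component `i` with type exponent `αᵢ` satisfies
`s^{-(1+αᵢ)} |FKKᵢ(χ, su₁, s²u₂, sw₁, s²w₂) - s^{1+αᵢ} FKK₀ᵢ| → 0` as `s → ∞`,
uniformly on `{u₁⁴ + u₂² + w₁⁴ + w₂² = 1}` with `χ` in any compact set. Hence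
`FKK ε` is asymptotically quasi-homogeneous of type `(0,1,2,1,2)` and order `2`. -/
theorem keyfitz_kranzer_asymptotically_quasi_homogeneous (ε : ℝ) :
    (∀ s : ℝ, 0 < s → ∀ χ u₁ u₂ w₁ w₂ : ℝ,
      FKK₀ (χ, s * u₁, s ^ 2 * u₂, s * w₁, s ^ 2 * w₂)
        = (0, s ^ 2 * (u₁ ^ 2 - u₂), s ^ 3 * ((1 / 3) * u₁ ^ 3), 0, 0)) ∧
    (∀ δ > (0 : ℝ), ∀ K : Set ℝ, IsCompact K →
      ∃ s₀ > (0 : ℝ), ∀ s ≥ s₀, ∀ χ ∈ K, ∀ u₁ u₂ w₁ w₂ : ℝ,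
        u₁ ^ 4 + u₂ ^ 2 + w₁ ^ 4 + w₂ ^ 2 = 1 →
        s ^ (-(1 : ℝ)) *
          |(FKK ε (χ, s * u₁, s ^ 2 * u₂, s * w₁, s ^ 2 * w₂)).1
            - s ^ (1 : ℕ) * (FKK₀ (χ, u₁, u₂, w₁, w₂)).1| < δ ∧
        s ^ (-(2 : ℝ)) *
          |(FKK ε (χ, s * u₁, s ^ 2 * u₂, s * w₁, s ^ 2 * w₂)).2.1
            - s ^ (2 : ℕ) * (FKK₀ (χ, u₁, u₂, w₁, w₂)).2.1| < δ ∧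
        s ^ (-(3 : ℝ)) *
          |(FKK ε (χ, s * u₁, s ^ 2 * u₂, s * w₁, s ^ 2 * w₂)).2.2.1
            - s ^ (3 : ℕ) * (FKK₀ (χ, u₁, u₂, w₁, w₂)).2.2.1| < δ ∧
        s ^ (-(2 : ℝ)) *
          |(FKK ε (χ, s * u₁, s ^ 2 * u₂, s * w₁, s ^ 2 * w₂)).2.2.2.1
            - s ^ (2 : ℕ) * (FKK₀ (χ, u₁, u₂, w₁, w₂)).2.2.2.1| < δ ∧
        s ^ (-(3 : ℝ)) *
          |(FKK ε (χ, s * u₁, s ^ 2 * u₂, s * w₁, s ^ 2 * w₂)).2.2.2.2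
            - s ^ (3 : ℕ) * (FKK₀ (χ, u₁, u₂, w₁, w₂)).2.2.2.2| < δ) := by
  constructor
  · intro s hs χ u₁ u₂ w₁ w₂
    simp only [FKK₀, Prod.mk.injEq]
    exact And.intro trivial (And.intro (by ring) (And.intro (by ring) trivial))
  · intro δ hδ K hK
    obtain ⟨C, hC⟩ := hK.isBounded.exists_norm_le
    obtain ⟨M, hMdef⟩ : ∃ M : ℝ, M = |ε| + |C| + 3 := ⟨_, rfl⟩
    have hM0 : (0:ℝ) ≤ M := by rw [hMdef]; positivity
    have hεM : |ε| ≤ M := by rw [hMdef]; nlinarith [abs_nonneg C]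
    have hC2M : |C| + 2 ≤ M := by rw [hMdef]; nlinarith [abs_nonneg ε]
    refine ⟨max 1 (M / δ + 1), lt_of_lt_of_le one_pos (le_max_left _ _), ?_⟩
    intro s hs χ hχ u₁ u₂ w₁ w₂ hsph
    have hs1 : (1 : ℝ) ≤ s := le_trans (le_max_left _ _) hs
    have hs0 : (0 : ℝ) < s := lt_of_lt_of_le one_pos hs1
    have hs2 : (0 : ℝ) < s ^ 2 := by positivity
    have hs3 : (0 : ℝ) < s ^ 3 := by positivity
    have hsd : M < s * δ := by
      have h1 : M / δ + 1 ≤ s := le_trans (le_max_right _ _) hs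
      have h2 : M / δ < s := by linarith
      calc M = M / δ * δ := by field_simp
        _ < s * δ := mul_lt_mul_of_pos_right h2 hδ
    have hχC : |χ| ≤ |C| := le_trans (hC χ hχ) (le_abs_self C)
    have hu1 : |u₁| ≤ 1 := by nlinarith [sq_abs u₁, abs_nonneg u₁, sq_nonneg u₂, sq_nonneg w₂, sq_nonneg (w₁ ^ 2), sq_nonneg (u₁ ^ 2 - 1)]
    have hu2 : |u₂| ≤ 1 := by nlinarith [sq_abs u₂, abs_nonneg u₂, sq_nonneg (u₁ ^ 2), sq_nonneg (w₁ ^ 2), sq_nonneg w₂]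
    have hw1 : |w₁| ≤ 1 := by nlinarith [sq_abs w₁, abs_nonneg w₁, sq_nonneg u₂, sq_nonneg w₂, sq_nonneg (u₁ ^ 2), sq_nonneg (w₁ ^ 2 - 1)]
    have hw2 : |w₂| ≤ 1 := by nlinarith [sq_abs w₂, abs_nonneg w₂, sq_nonneg (u₁ ^ 2), sq_nonneg (w₁ ^ 2), sq_nonneg u₂]
    have e1 : s ^ (-(1 : ℝ)) = s⁻¹ := by
      rw [Real.rpow_neg hs0.le, Real.rpow_one]
    have e2 : s ^ (-(2 : ℝ)) = (s ^ 2)⁻¹ := by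
      rw [Real.rpow_neg hs0.le, show (2 : ℝ) = ((2 : ℕ) : ℝ) by norm_num, Real.rpow_natCast]
    have e3 : s ^ (-(3 : ℝ)) = (s ^ 3)⁻¹ := by
      rw [Real.rpow_neg hs0.le, show (3 : ℝ) = ((3 : ℕ) : ℝ) by norm_num, Real.rpow_natCast]
    simp only [FKK, FKK₀, e1, e2, e3]
    refine ⟨?_, ?_, ?_, ?_, ?_⟩
    · rw [inv_mul_lt_iff₀ hs0]
      have h1 : |ε - s ^ (1 : ℕ) * (0 : ℝ)| = |ε| := by norm_num
      rw [h1]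
      linarith
    · rw [inv_mul_lt_iff₀ hs2]
      have h1 : ((s * u₁) ^ 2 - s ^ 2 * u₂ - χ * (s * u₁) - s * w₁) - s ^ (2 : ℕ) * (u₁ ^ 2 - u₂) = -(s * (χ * u₁ + w₁)) := by ring
      rw [h1, abs_neg, abs_mul, abs_of_pos hs0]
      have hA : |χ * u₁ + w₁| ≤ M := by
        calc |χ * u₁ + w₁| ≤ |χ * u₁| + |w₁| := abs_add_le _ _
          _ = |χ| * |u₁| + |w₁| := by rw [abs_mul]
          _ ≤ |C| * 1 + 1 := by gcongr
          _ ≤ M := by linarith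
      calc s * |χ * u₁ + w₁| ≤ s * M := by gcongr
        _ < s * (s * δ) := mul_lt_mul_of_pos_left hsd hs0
        _ = s ^ 2 * δ := by ring
    · rw [inv_mul_lt_iff₀ hs3]
      have h1 : ((1 / 3) * (s * u₁) ^ 3 - s * u₁ - χ * (s ^ 2 * u₂) - s ^ 2 * w₂) - s ^ (3 : ℕ) * ((1 / 3) * u₁ ^ 3) = -(s * u₁ + s ^ 2 * (χ * u₂ + w₂)) := by ring
      rw [h1, abs_neg]
      have hA : |χ * u₂ + w₂| ≤ |C| + 1 := by
        calc |χ * u₂ + w₂| ≤ |χ * u₂| + |w₂| := abs_add_le _ _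
          _ = |χ| * |u₂| + |w₂| := by rw [abs_mul]
          _ ≤ |C| * 1 + 1 := by gcongr
          _ = |C| + 1 := by ring
      calc |s * u₁ + s ^ 2 * (χ * u₂ + w₂)|
          ≤ |s * u₁| + |s ^ 2 * (χ * u₂ + w₂)| := abs_add_le _ _
        _ = s * |u₁| + s ^ 2 * |χ * u₂ + w₂| := by
            rw [abs_mul, abs_mul, abs_of_pos hs0, abs_of_pos hs2]
        _ ≤ s ^ 2 * 1 + s ^ 2 * (|C| + 1) := by
            have h2 : s * |u₁| ≤ s ^ 2 * 1 := by nlinarith [abs_nonneg u₁]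
            have h3 : s ^ 2 * |χ * u₂ + w₂| ≤ s ^ 2 * (|C| + 1) := by gcongr
            linarith
        _ = s ^ 2 * (|C| + 2) := by ring
        _ ≤ s ^ 2 * M := by gcongr
        _ < s ^ 2 * (s * δ) := mul_lt_mul_of_pos_left hsd hs2
        _ = s ^ 3 * δ := by ring
    · rw [inv_mul_lt_iff₀ hs2]
      have h1 : (-(ε * (s * u₁)) - s ^ (2 : ℕ) * (0 : ℝ)) = -(s * (ε * u₁)) := by ring
      rw [h1, abs_neg, abs_mul, abs_of_pos hs0, abs_mul]
      calc s * (|ε| * |u₁|) ≤ s * (M * 1) := by gcongr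
        _ = s * M := by ring
        _ < s * (s * δ) := mul_lt_mul_of_pos_left hsd hs0
        _ = s ^ 2 * δ := by ring
    · rw [inv_mul_lt_iff₀ hs3]
      have h1 : (-(ε * (s ^ 2 * u₂)) - s ^ (3 : ℕ) * (0 : ℝ)) = -(s ^ 2 * (ε * u₂)) := by ring
      rw [h1, abs_neg, abs_mul, abs_of_pos hs2, abs_mul]
      calc s ^ 2 * (|ε| * |u₂|) ≤ s ^ 2 * (M * 1) := by gcongr
        _ = s ^ 2 * M := by ring
        _ < s ^ 2 * (s * δ) := mul_lt_mul_of_pos_left hsd hs2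
        _ = s ^ 3 * δ := by ring
end

section
/- Let m < 0 and α, β ∈ ℝ, and define the desingularized vector field g on ℝ × [0,∞) × ℝ by g(χ,s,x) = (s^{1−m}, −sx, −x² − βχx − α·s^{1−m}), where s^{1−m} is the real power (for s ≥ 0). Then: (i) for every χ ∈ ℝ, both (χ, 0, 0) and (χ, 0, −βχ) are equilibria of g; (ii) g is differentiable at each point (χ, 0, −βχ) (one-sidedly in s, using that 1−m > 1 so the right derivative of s ↦ s^{1−m} at 0 is 0), and its Jacobian matrix there, in the order of variables (χ, s, x), is [[0,0,0],[0,βχ,0],[β²χ,0,βχ]]; (iii) this matrix has eigenvalues 0 and βχ (the latter with algebraic multiplicity two), and if β < 0 and χ > 0 then both nonzero eigenvalues are negative, so the family of equilibria {(χ, 0, −βχ) : χ ≥ χ₀} (χ₀ > 0) is normally attracting. -/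
open Real Set Matrix Polynomial

/-!
On the horizon `s = 0` the field reduces to `(0, 0, -x (x + βχ))`, whose zeros are `x = 0` and
`x = -βχ`. Since `1 - m > 1`, the term `s^{1-m}` is flat at `s = 0`, so the Jacobian along the
horizon only sees the polynomial part of the field. At `x = -βχ` it is lower triangular with
diagonal `(0, βχ, βχ)`, which gives the characteristic polynomial and the spectrum.
-/

/-- The desingularized self-similar-profile vector field
`(χ, s, x) ↦ (s^{1-m}, -s x, -x² - βχ x - α s^{1-m})` (real power for `s ≥ 0`). -/
noncomputable def SSdesing (m a b : ℝ) (P : ℝ × ℝ × ℝ) : ℝ × ℝ × ℝ :=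
  (P.2.1 ^ (1 - m),
   -(P.2.1 * P.2.2),
   -(P.2.2 ^ 2) - b * P.1 * P.2.2 - a * P.2.1 ^ (1 - m))

lemma Real.hasDerivAt_rpow_const_zero {p : ℝ} (hp : 1 < p) :
    HasDerivAt (fun s : ℝ => s ^ p) 0 0 := by
  simpa [Real.zero_rpow (sub_ne_zero.mpr hp.ne')] using
    Real.hasDerivAt_rpow_const (x := 0) (Or.inr hp.le)

lemma SSdesing_horizon {m : ℝ} (hm : m ≠ 1) (a b χ x : ℝ) :
    SSdesing m a b (χ, 0, x) = (0, 0, -(x * (x + b * χ))) := by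
  simp only [SSdesing, Real.zero_rpow (sub_ne_zero.mpr (Ne.symm hm))]
  ext <;> simp only [zero_mul, neg_zero]
  ring

/-- The Jacobian of `SSdesing m a b` at the horizon point `(χ, 0, x)`. -/
noncomputable def horizonJacobian (b χ x : ℝ) : ℝ × ℝ × ℝ →L[ℝ] ℝ × ℝ × ℝ :=
  LinearMap.toContinuousLinearMap
    { toFun := fun P => (0, -x * P.2.1, -(b * x) * P.1 - (2 * x + b * χ) * P.2.2)
      map_add' := fun P Q => by ext <;> simp only [Prod.fst_add, Prod.snd_add] <;> ring
      map_smul' := fun c P => by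
        ext <;> simp only [Prod.smul_fst, Prod.smul_snd, smul_eq_mul, RingHom.id_apply] <;> ring }

@[simp]
lemma horizonJacobian_apply (b χ x : ℝ) (P : ℝ × ℝ × ℝ) :
    horizonJacobian b χ x P = (0, -x * P.2.1, -(b * x) * P.1 - (2 * x + b * χ) * P.2.2) :=
  rfl

lemma hasFDerivAt_SSdesing_horizon {m : ℝ} (hm : m < 0) (a b χ x : ℝ) :
    HasFDerivAt (SSdesing m a b) (horizonJacobian b χ x) (χ, 0, x) := by
  have hχ := hasFDerivAt_fst (𝕜 := ℝ) (p := ((χ, 0, x) : ℝ × ℝ × ℝ))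
  have hs := (hasFDerivAt_snd (𝕜 := ℝ) (p := ((χ, 0, x) : ℝ × ℝ × ℝ))).fst
  have hx := (hasFDerivAt_snd (𝕜 := ℝ) (p := ((χ, 0, x) : ℝ × ℝ × ℝ))).snd
  have hflat :=
    (Real.hasDerivAt_rpow_const_zero (p := 1 - m) (by linarith)).comp_hasFDerivAt (χ, 0, x) hs
  have h := hflat.prodMk ((hs.mul hx).neg.prodMk
    (((hx.pow 2).neg.sub ((hχ.const_mul b).mul hx)).sub (hflat.const_mul a)))
  refine (h.congr_fderiv ?_).congr_of_eventuallyEq (.of_forall fun P => ?_)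
  · refine ContinuousLinearMap.ext fun P => ?_
    simp only [zero_smul, zero_add, Nat.add_one_sub_one, pow_one, nsmul_eq_mul, Nat.cast_ofNat,
      smul_zero, sub_zero, ContinuousLinearMap.prod_apply, _root_.zero_apply, _root_.neg_apply,
      _root_.smul_apply, ContinuousLinearMap.comp_apply, ContinuousLinearMap.coe_snd',
      ContinuousLinearMap.coe_fst', smul_eq_mul, _root_.sub_apply, _root_.add_apply,
      horizonJacobian_apply, neg_mul, Prod.ext_iff, true_and]
    ring
  · simp [SSdesing]

lemma charpoly_horizon_matrix {R : Type*} [CommRing R] (c d : R) :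
    (!![0, 0, 0; 0, c, 0; d, 0, c] : Matrix (Fin 3) (Fin 3) R).charpoly = X * (X - C c) ^ 2 := by
  rw [Matrix.charpoly, Matrix.det_fin_three]
  simp only [Fin.isValue, charmatrix_apply_eq, of_apply, cons_val', cons_val_zero, cons_val_fin_one,
    map_zero, sub_zero, cons_val_one, cons_val, ne_eq, Fin.reduceEq, not_false_eq_true,
    charmatrix_apply_ne, neg_zero, mul_zero, zero_ne_one, one_ne_zero, zero_mul, mul_neg, add_zero]
  ring

lemma spectrum_horizon_matrix {K : Type*} [Field K] (c d : K) :
    spectrum K (!![0, 0, 0; 0, c, 0; d, 0, c] : Matrix (Fin 3) (Fin 3) K) = {0, c} := by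
  ext μ
  simp [Matrix.mem_spectrum_iff_isRoot_charpoly, charpoly_horizon_matrix, sub_eq_zero]

/-- For `m < 0`: (i) every `(χ,0,0)` and `(χ,0,-βχ)` is an
equilibrium of the desingularized field; (ii) the field is differentiable at
`(χ,0,-βχ)` (one-sidedly in `s`, within `{s ≥ 0}`) with Jacobian
`[[0,0,0],[0,βχ,0],[β²χ,0,βχ]]`; (iii) this matrix has eigenvalues `0` and `βχ`, the
latter of algebraic multiplicity two (charpoly `X(X - βχ)²`), and when `β < 0`,
`χ > 0` the nonzero eigenvalue `βχ` is negative, so the family of equilibria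
`(χ, 0, -βχ)` is normally attracting. -/
theorem selfsimilar_horizon_equilibria (m a b : ℝ) (hm : m < 0) :
    (∀ χ : ℝ, SSdesing m a b (χ, 0, 0) = 0 ∧ SSdesing m a b (χ, 0, -(b * χ)) = 0) ∧
    (∀ χ : ℝ, ∃ L : ℝ × ℝ × ℝ →L[ℝ] ℝ × ℝ × ℝ,
      (∀ P : ℝ × ℝ × ℝ,
        L P = (0, b * χ * P.2.1, b ^ 2 * χ * P.1 + b * χ * P.2.2)) ∧
      HasFDerivWithinAt (SSdesing m a b) L {P : ℝ × ℝ × ℝ | 0 ≤ P.2.1}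
        (χ, 0, -(b * χ))) ∧
    (∀ χ : ℝ,
      spectrum ℝ (!![0, 0, 0; 0, b * χ, 0; b ^ 2 * χ, 0, b * χ] : Matrix (Fin 3) (Fin 3) ℝ)
          = {0, b * χ} ∧
      (!![0, 0, 0; 0, b * χ, 0; b ^ 2 * χ, 0, b * χ] : Matrix (Fin 3) (Fin 3) ℝ).charpoly
          = X * (X - C (b * χ)) ^ 2 ∧
      (b < 0 → 0 < χ → b * χ < 0)) := by
  refine ⟨fun χ => ?equilibria, fun χ => ?jacobian, fun χ => ?spectrum⟩
  case equilibria =>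
    simp [SSdesing_horizon (hm.trans one_pos).ne]
  case jacobian =>
    refine ⟨horizonJacobian b χ (-(b * χ)), fun P => ?_,
      (hasFDerivAt_SSdesing_horizon hm a b χ _).hasFDerivWithinAt⟩
    ext <;> simp only [horizonJacobian_apply] <;> ring
  case spectrum =>
    exact ⟨spectrum_horizon_matrix _ _, charpoly_horizon_matrix _ _,
      mul_neg_of_neg_of_pos⟩
end

section
/- For every t₀ ∈ ℝ there exist a finite time t_max ∈ (t₀, ∞), a constant c_u > 0, and a twice continuously differentiable function u : [t₀, t_max) → ℝ such that u''(t) = 6·u(t)² + t for all t ∈ [t₀, t_max) and u(t)·(t_max − t)² → c_u as t → t_max⁻. In particular, the first Painlevé equation admits solutions that blow up in finite time with the type-I rate u(t) ∼ c_u·(t_max − t)^{−2}. -/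
/-!
Look for a solution with a double pole at `t = a`: `u (a + x) = x⁻² + w x` with `w` a power
series. The equation becomes `x² w'' = 12 w + 6 x² w² + x² (a + x)`, which determines the
Taylor coefficients `cₙ` of `w` recursively, except for the resonant coefficient `c₄`, which
is free. Induction on the recursion gives `|cₙ| ≤ Rⁿ` for `R = |a| + 2`, so `w` converges on
`|x| < R⁻¹` and can be differentiated termwise there. Placing the pole `a` to the right of
`t₀` within that radius gives a solution on `[t₀, a)` with `u t * (a - t)² → 1`.
-/

open Real Set Filter Topology

open Finset in
theorem abs_sum_range_mul_le_of_abs_le_pow {c : ℕ → ℝ} {R : ℝ} {n : ℕ}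
    (hc : ∀ k ≤ n, |c k| ≤ R ^ k) :
    |∑ k ∈ range (n + 1), c k * c (n - k)| ≤ (n + 1) * R ^ n := by
  calc |∑ k ∈ range (n + 1), c k * c (n - k)|
      ≤ ∑ k ∈ range (n + 1), |c k| * |c (n - k)| := by
        simpa only [abs_mul] using abs_sum_le_sum_abs (fun k => c k * c (n - k)) (range (n + 1))
    _ ≤ ∑ k ∈ range (n + 1), R ^ k * R ^ (n - k) := by
        refine sum_le_sum fun k hk => ?_
        have hkn : k ≤ n := Nat.lt_succ_iff.mp (mem_range.mp hk)
        exact mul_le_mul (hc k hkn) (hc _ (Nat.sub_le n k)) (abs_nonneg _)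
          ((abs_nonneg _).trans (hc k hkn))
    _ = (n + 1) * R ^ n := by
        rw [sum_congr rfl fun k hk => by
          rw [← pow_add, Nat.add_sub_cancel' (Nat.lt_succ_iff.mp (mem_range.mp hk))]]
        simp

open Finset in
theorem sum_range_mul_pow_mul_pow (c : ℕ → ℝ) (x : ℝ) (n : ℕ) :
    ∑ k ∈ range (n + 1), c k * x ^ k * (c (n - k) * x ^ (n - k))
      = (∑ k ∈ range (n + 1), c k * c (n - k)) * x ^ n := by
  rw [sum_mul]
  refine sum_congr rfl fun k hk => ?_
  rw [show x ^ n = x ^ k * x ^ (n - k) by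
    rw [← pow_add, Nat.add_sub_cancel' (Nat.lt_succ_iff.mp (mem_range.mp hk))]]
  ring

def SummableOnBall (c : ℕ → ℝ) (ρ : ℝ) : Prop :=
  ∀ r, 0 ≤ r → r < ρ → Summable fun n => |c n| * r ^ n

def derivCoeff (c : ℕ → ℝ) (n : ℕ) : ℝ := (n + 1) * c (n + 1)

namespace SummableOnBall

variable {c : ℕ → ℝ} {ρ x : ℝ}

theorem of_abs_le_pow {R : ℝ} (hR : 0 < R) (hc : ∀ n, |c n| ≤ R ^ n) :
    SummableOnBall c R⁻¹ := by
  intro r hr hrR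
  have hq : R * r < 1 := by simpa [mul_inv_cancel₀ hR.ne'] using mul_lt_mul_of_pos_left hrR hR
  refine (summable_geometric_of_lt_one (by positivity) hq).of_nonneg_of_le
    (fun n => by positivity) fun n => ?_
  rw [mul_pow]
  gcongr
  exact hc n

theorem summable_norm_mul_pow (h : SummableOnBall c ρ) (hx : |x| < ρ) :
    Summable fun n => ‖c n * x ^ n‖ := by
  simpa only [norm_mul, norm_pow, Real.norm_eq_abs] using h |x| (abs_nonneg x) hx

theorem derivCoeff (h : SummableOnBall c ρ) : SummableOnBall (derivCoeff c) ρ := by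
  intro r hr hrρ
  obtain ⟨r', hrr', hr'ρ⟩ := exists_between hrρ
  have hr' : 0 < r' := hr.trans_lt hrr'
  set q := r / r'
  have hlim : Tendsto (fun n : ℕ => ((n : ℝ) + 1) * q ^ n) atTop (𝓝 0) := by
    have hq0 : 0 ≤ q := div_nonneg hr hr'.le
    have hq1 : q < 1 := (div_lt_one hr').mpr hrr'
    simpa [add_mul] using (tendsto_self_mul_const_pow_of_lt_one hq0 hq1).add
      (tendsto_pow_atTop_nhds_zero_of_lt_one hq0 hq1)
  refine .of_norm_bounded_eventually_nat
    (((summable_nat_add_iff 1).mpr (h r' hr'.le hr'ρ)).div_const r') ?_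
  filter_upwards [hlim.eventually (ge_mem_nhds one_pos)] with n hn
  rw [Real.norm_eq_abs, abs_mul, abs_of_nonneg (by positivity), _root_.derivCoeff, abs_mul,
    abs_of_nonneg (by positivity : (0 : ℝ) ≤ (n : ℝ) + 1),
    abs_of_nonneg (by positivity : 0 ≤ r ^ n)]
  have hrq : r = q * r' := (div_mul_cancel₀ r hr'.ne').symm
  calc (n + 1) * |c (n + 1)| * r ^ n = |c (n + 1)| * r' ^ n * ((n + 1) * q ^ n) := by
        rw [hrq, mul_pow]; ring
    _ ≤ |c (n + 1)| * r' ^ n * 1 := by gcongr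
    _ = |c (n + 1)| * r' ^ (n + 1) / r' := by field_simp; ring

theorem hasDerivAt (h : SummableOnBall c ρ) (hx : |x| < ρ) :
    HasDerivAt (fun y => ∑' n, c n * y ^ n) (∑' n, _root_.derivCoeff c n * x ^ n) x := by
  obtain ⟨s, hxs, hsρ⟩ := exists_between hx
  have hs : 0 < s := (abs_nonneg x).trans_lt hxs
  have hmajorant : Summable fun n => |c n| * n * s ^ (n - 1) := by
    refine (summable_nat_add_iff 1).mp ((h.derivCoeff s hs.le hsρ).congr fun n => ?_)
    rw [_root_.derivCoeff, abs_mul, abs_of_nonneg (by positivity : (0 : ℝ) ≤ (n : ℝ) + 1)]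
    push_cast
    ring_nf
  have hle_majorant : ∀ n, ∀ y ∈ Metric.ball (0 : ℝ) s,
      ‖c n * (n * y ^ (n - 1))‖ ≤ |c n| * n * s ^ (n - 1) := by
    intro n y hy
    rw [norm_mul, norm_mul, norm_pow, Real.norm_eq_abs, Real.norm_eq_abs, Nat.abs_cast,
      ← mul_assoc]
    gcongr
    exact (mem_ball_zero_iff.mp hy).le
  have hx' : x ∈ Metric.ball (0 : ℝ) s := mem_ball_zero_iff.mpr hxs
  have hsum0 : Summable fun n => c n * (0 : ℝ) ^ n :=
    (h.summable_norm_mul_pow (by rw [abs_zero]; exact hs.trans hsρ)).of_norm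
  have hderiv := hasDerivAt_tsum_of_isPreconnected hmajorant Metric.isOpen_ball
    (convex_ball 0 s).isPreconnected (fun n y _ => (hasDerivAt_pow n y).const_mul (c n))
    hle_majorant (Metric.mem_ball_self hs) hsum0 hx'
  have hsum : Summable fun n => c n * (n * x ^ (n - 1)) :=
    .of_norm_bounded hmajorant fun n => hle_majorant n x hx'
  refine hderiv.congr_deriv ?_
  rw [hsum.tsum_eq_zero_add]
  simp only [_root_.derivCoeff, CharP.cast_eq_zero, zero_mul, mul_zero, zero_add]
  exact tsum_congr fun n => by push_cast; ring

end SummableOnBall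

namespace PainleveI

open Finset

def forcingCoeff (a : ℝ) (n : ℕ) : ℝ := if n = 0 then a else if n = 1 then 1 else 0

/-- Taylor coefficients of the regular part `w` of the pole expansion `u (a + x) = x⁻² + w x`,
read off from the coefficient of `x ^ (n + 2)` in `x² w'' = 12 w + 6 x² w² + x² (a + x)`.
At the resonance `n = 2` the divisor vanishes and `_ / 0 = 0` chooses the free coefficient
`c₄ = 0`. -/
noncomputable def poleCoeff (a : ℝ) : ℕ → ℝ
  | 0 => 0
  | 1 => 0
  | n + 2 => (6 * ∑ k ∈ (range (n + 1)).attach, poleCoeff a k * poleCoeff a (n - k)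
      + forcingCoeff a n) / (((n : ℝ) + 2) * ((n : ℝ) + 1) - 12)
  decreasing_by
  · have := mem_range.mp k.2; omega
  · omega

theorem poleCoeff_add_two (a : ℝ) (n : ℕ) :
    poleCoeff a (n + 2) = (6 * ∑ k ∈ range (n + 1), poleCoeff a k * poleCoeff a (n - k)
      + forcingCoeff a n) / (((n : ℝ) + 2) * ((n : ℝ) + 1) - 12) := by
  rw [poleCoeff, sum_attach (range (n + 1)) fun k => poleCoeff a k * poleCoeff a (n - k)]

@[simp] theorem poleCoeff_zero (a : ℝ) : poleCoeff a 0 = 0 := by rw [poleCoeff]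

@[simp] theorem poleCoeff_one (a : ℝ) : poleCoeff a 1 = 0 := by rw [poleCoeff]

theorem poleCoeff_two (a : ℝ) : poleCoeff a 2 = -a / 10 := by
  rw [poleCoeff_add_two]; norm_num [forcingCoeff]; ring

theorem poleCoeff_three (a : ℝ) : poleCoeff a 3 = -1 / 6 := by
  rw [poleCoeff_add_two]; norm_num [forcingCoeff, sum_range_succ]

theorem poleCoeff_four (a : ℝ) : poleCoeff a 4 = 0 := by
  rw [poleCoeff_add_two]; norm_num

theorem poleCoeff_recurrence (a : ℝ) (n : ℕ) :
    (((n : ℝ) + 2) * ((n : ℝ) + 1) - 12) * poleCoeff a (n + 2)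
      = 6 * ∑ k ∈ range (n + 1), poleCoeff a k * poleCoeff a (n - k) + forcingCoeff a n := by
  rcases eq_or_ne n 2 with rfl | hn
  · norm_num [sum_range_succ, forcingCoeff]
  · have hD : ((n : ℝ) + 2) * ((n : ℝ) + 1) - 12 ≠ 0 := by
      intro h
      have : (n + 2) * (n + 1) = 12 := by exact_mod_cast (sub_eq_zero.mp h)
      exact hn (by nlinarith)
    rw [poleCoeff_add_two, mul_div_cancel₀ _ hD]

theorem abs_poleCoeff_le {a R : ℝ} (hR : 2 ≤ R) (ha : |a| ≤ R ^ 2) (n : ℕ) :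
    |poleCoeff a n| ≤ R ^ n := by
  induction n using Nat.strong_induction_on with
  | _ n ih =>
    match n with
    | 0 | 1 | 4 =>
      simp only [poleCoeff_zero, poleCoeff_one, poleCoeff_four, abs_zero]
      exact pow_nonneg (by linarith) _
    | 2 => rw [poleCoeff_two, abs_div, abs_neg]; norm_num; linarith [abs_nonneg a]
    | 3 => rw [poleCoeff_three]; norm_num; nlinarith
    | n + 5 =>
      have hconv := abs_sum_range_mul_le_of_abs_le_pow (c := poleCoeff a) (n := n + 3)
        fun k hk => ih k (by omega)
      rw [poleCoeff_add_two, show forcingCoeff a (n + 3) = 0 by simp [forcingCoeff], add_zero]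
      set D : ℝ := ((n + 3 : ℕ) + 2) * ((n + 3 : ℕ) + 1) - 12
      have hD : 8 ≤ D := by push_cast [D]; nlinarith [n.cast_nonneg (α := ℝ)]
      have hRD : 6 * ((n + 3 : ℕ) + 1) ≤ R ^ 2 * D := by
        have hR4 : 4 ≤ R ^ 2 := by nlinarith
        have : 6 * ((n + 3 : ℕ) + 1) ≤ 4 * D := by
          push_cast [D]; nlinarith [n.cast_nonneg (α := ℝ)]
        nlinarith
      rw [abs_div, abs_of_pos (by linarith : 0 < D), div_le_iff₀ (by linarith), abs_mul,
        abs_of_pos (by norm_num : (0 : ℝ) < 6)]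
      calc 6 * |∑ k ∈ range (n + 3 + 1), poleCoeff a k * poleCoeff a (n + 3 - k)|
          ≤ 6 * ((n + 3 : ℕ) + 1) * R ^ (n + 3) := by rw [mul_assoc]; gcongr
        _ ≤ R ^ 2 * D * R ^ (n + 3) := by gcongr
        _ = R ^ (n + 5) * D := by ring

theorem summableOnBall_poleCoeff (a : ℝ) : SummableOnBall (poleCoeff a) (|a| + 2)⁻¹ :=
  .of_abs_le_pow (by positivity) (abs_poleCoeff_le (by linarith [abs_nonneg a])
    (by nlinarith [abs_nonneg a]))

noncomputable def regularPart (a x : ℝ) : ℝ := ∑' n, poleCoeff a n * x ^ n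

theorem hasSum_forcingCoeff_mul_pow (a x : ℝ) :
    HasSum (fun n => forcingCoeff a n * x ^ (n + 2)) (x ^ 2 * (a + x)) := by
  have h : HasSum (fun n => forcingCoeff a n * x ^ (n + 2))
      (∑ n ∈ range 2, forcingCoeff a n * x ^ (n + 2)) := by
    refine hasSum_sum_of_ne_finset_zero fun n hn => ?_
    simp only [Finset.mem_range, not_lt] at hn
    simp [forcingCoeff, show n ≠ 0 by omega, show n ≠ 1 by omega]
  convert h using 1
  simp [sum_range_succ, forcingCoeff]
  ring

theorem sq_mul_second_derivative_regularPart {a x : ℝ} (hx : |x| < (|a| + 2)⁻¹) :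
    x ^ 2 * ∑' n, derivCoeff (derivCoeff (poleCoeff a)) n * x ^ n
      = 12 * regularPart a x + 6 * x ^ 2 * regularPart a x ^ 2 + x ^ 2 * (a + x) := by
  have hc := summableOnBall_poleCoeff a
  have hnorm := hc.summable_norm_mul_pow hx
  have hw : HasSum (fun n => poleCoeff a n * x ^ n) (regularPart a x) := hnorm.of_norm.hasSum
  have hw_shift : HasSum (fun n => poleCoeff a (n + 2) * x ^ (n + 2)) (regularPart a x) := by
    -- the two dropped terms vanish since `c₀ = c₁ = 0`
    simpa [sum_range_succ] using (hasSum_nat_add_iff' 2).mpr hw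
  have hlhs := (((hc.derivCoeff.derivCoeff.summable_norm_mul_pow hx).of_norm.hasSum).mul_left
    (x ^ 2)).sub (hw_shift.mul_left 12)
  have hrhs := ((hasSum_sum_range_mul_of_summable_norm hnorm hnorm).mul_left (6 * x ^ 2)).add
    (hasSum_forcingCoeff_mul_pow a x)
  have hterm : ∀ n : ℕ, x ^ 2 * (derivCoeff (derivCoeff (poleCoeff a)) n * x ^ n)
      - 12 * (poleCoeff a (n + 2) * x ^ (n + 2))
      = 6 * x ^ 2 * ∑ k ∈ range (n + 1),
          poleCoeff a k * x ^ k * (poleCoeff a (n - k) * x ^ (n - k))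
        + forcingCoeff a n * x ^ (n + 2) := by
    intro n
    rw [sum_range_mul_pow_mul_pow, derivCoeff, derivCoeff]
    push_cast
    linear_combination x ^ (n + 2) * poleCoeff_recurrence a n
  simp only [hterm] at hlhs
  have := hlhs.unique hrhs
  rw [← regularPart] at this
  linarith

noncomputable def poleSolution (a x : ℝ) : ℝ := x ^ (-2 : ℤ) + regularPart a x

noncomputable def poleSolutionDeriv (a x : ℝ) : ℝ :=
  -2 * x ^ (-3 : ℤ) + ∑' n, derivCoeff (poleCoeff a) n * x ^ n

variable {a x : ℝ}

theorem hasDerivAt_poleSolution (hx0 : x ≠ 0) (hx : |x| < (|a| + 2)⁻¹) :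
    HasDerivAt (poleSolution a) (poleSolutionDeriv a x) x := by
  refine ((hasDerivAt_zpow (-2) x (.inl hx0)).add
    ((summableOnBall_poleCoeff a).hasDerivAt hx)).congr_deriv ?_
  norm_num [poleSolutionDeriv]

theorem hasDerivAt_poleSolutionDeriv (hx0 : x ≠ 0) (hx : |x| < (|a| + 2)⁻¹) :
    HasDerivAt (poleSolutionDeriv a) (6 * poleSolution a x ^ 2 + (a + x)) x := by
  have hpow := (hasDerivAt_zpow (-3) x (.inl hx0)).const_mul (-2)
  have hode := sq_mul_second_derivative_regularPart hx
  refine (hpow.add ((summableOnBall_poleCoeff a).derivCoeff.hasDerivAt hx)).congr_deriv ?_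
  have hW2 : ∑' n, derivCoeff (derivCoeff (poleCoeff a)) n * x ^ n
      = 12 * (x ^ 2)⁻¹ * regularPart a x + 6 * regularPart a x ^ 2 + (a + x) := by
    field_simp
    linear_combination hode
  rw [hW2, poleSolution]
  norm_num [zpow_neg]
  ring

theorem tendsto_poleSolution_mul_sq :
    Tendsto (fun x => poleSolution a x * x ^ 2) (𝓝[≠] 0) (𝓝 1) := by
  have hw : ContinuousAt (regularPart a) 0 :=
    ((summableOnBall_poleCoeff a).hasDerivAt (by simp; positivity)).continuousAt
  have hlim : Tendsto (fun x => 1 + regularPart a x * x ^ 2) (𝓝 0)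
      (𝓝 (1 + regularPart a 0 * 0 ^ 2)) :=
    tendsto_const_nhds.add (hw.tendsto.mul ((continuous_pow 2).tendsto 0))
  rw [zero_pow two_ne_zero, mul_zero, add_zero] at hlim
  refine (hlim.mono_left nhdsWithin_le_nhds).congr' ?_
  filter_upwards [self_mem_nhdsWithin] with x hx
  rw [poleSolution, add_mul, zpow_neg, zpow_ofNat, inv_mul_cancel₀ (pow_ne_zero 2 hx)]

theorem exists_pole_within_radius (t₀ : ℝ) : ∃ a, t₀ < a ∧ a - t₀ < (|a| + 2)⁻¹ := by
  have hδ : 0 < (|t₀| + 4)⁻¹ := by positivity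
  have hδ1 : (|t₀| + 4)⁻¹ < 1 := inv_lt_one_of_one_lt₀ (by linarith [abs_nonneg t₀])
  refine ⟨t₀ + (|t₀| + 4)⁻¹, by linarith, ?_⟩
  have : |t₀ + (|t₀| + 4)⁻¹| + 2 < |t₀| + 4 := by
    linarith [abs_add_le t₀ (|t₀| + 4)⁻¹, abs_of_pos hδ]
  rw [add_sub_cancel_left]
  gcongr

end PainleveI

open PainleveI in
/-- For every initial time `t₀` there exist a finite blow-up time
`t_max ∈ (t₀, ∞)`, a constant `c_u > 0`, and a twice continuously differentiable
solution `u` of the first Painlevé equation `u'' = 6u² + t` on `[t₀, t_max)` with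
`u(t)(t_max - t)² → c_u` as `t → t_max⁻`; i.e. the first Painlevé equation admits
finite-time blow-up solutions with the type-I rate `u(t) ∼ c_u (t_max - t)^{-2}`. -/
theorem painleve_blowup_exists :
    ∀ t₀ : ℝ, ∃ tmax : ℝ, t₀ < tmax ∧ ∃ c_u : ℝ, 0 < c_u ∧
      ∃ u du : ℝ → ℝ,
        (∀ t ∈ Ico t₀ tmax, HasDerivWithinAt u (du t) (Ico t₀ tmax) t) ∧
        (∀ t ∈ Ico t₀ tmax,
          HasDerivWithinAt du (6 * u t ^ 2 + t) (Ico t₀ tmax) t) ∧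
        Tendsto (fun t => u t * (tmax - t) ^ 2) (𝓝[<] tmax) (𝓝 c_u) := by
  intro t₀
  obtain ⟨a, ht₀a, hradius⟩ := exists_pole_within_radius t₀
  have hlocal : ∀ t ∈ Ico t₀ a, t - a ≠ 0 ∧ |t - a| < (|a| + 2)⁻¹ :=
    fun t ⟨ht₀, hta⟩ => ⟨sub_ne_zero.mpr hta.ne, by rw [abs_of_neg (sub_neg.mpr hta)]; linarith⟩
  refine ⟨a, ht₀a, 1, one_pos, fun t => poleSolution a (t - a),
    fun t => poleSolutionDeriv a (t - a), fun t ht => ?_, fun t ht => ?_, ?_⟩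
  · obtain ⟨hx0, hx⟩ := hlocal t ht
    exact ((hasDerivAt_poleSolution hx0 hx).comp_sub_const t a).hasDerivWithinAt
  · obtain ⟨hx0, hx⟩ := hlocal t ht
    have h := (hasDerivAt_poleSolutionDeriv hx0 hx).comp_sub_const t a
    rw [add_sub_cancel] at h
    exact h.hasDerivWithinAt
  · have hshift : Tendsto (fun t => t - a) (𝓝[<] a) (𝓝[≠] 0) :=
      tendsto_nhdsWithin_iff.mpr ⟨((continuous_sub_right a).tendsto' a 0 (sub_self a)).mono_left
        nhdsWithin_le_nhds, eventually_nhdsWithin_of_forall fun t ht => sub_ne_zero.mpr ht.ne⟩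
    refine ((tendsto_poleSolution_mul_sq (a := a)).comp hshift).congr fun t => ?_
    simp only [Function.comp]
    ring
end
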